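/- arXiv:1907.05589 — 10 statements merged into one kernel-verified Lean document; each statement's English description precedes it below -/
import Mathlib

section
/- For all positive integers n, d with 1 ≤ d < n, off(n,d) = 1/(n·𝒮𝓛(n, n−d) − 1). -/
open scoped ENNReal BigOperators
open Matrix

/-- `off n d`: the infimum of all `ε ≥ 0` such that there is a real `n × n` matrix `B` of
rank at most `d` with unit diagonal and all off-diagonal entries of absolute value at most `ε`. -/
noncomputable def off (n d : ℕ) : ℝ :=
  sInf {ε : ℝ | 0 ≤ ε ∧ ∃ B : Matrix (Fin n) (Fin n) ℝ,
    B.rank ≤ d ∧ (∀ i, B i i = 1) ∧ ∀ i j, i ≠ j → |B i j| ≤ ε}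

/-- `𝓛(μ)` for `μ` the uniform distribution on the multiset of vectors `x 0, …, x (n-1)` in
`ℝ^k`: the infimum over nonzero `y` in the support of `μ` and nonzero `v ∈ ℝ^k` of
`(𝔼_{x ∼ μ} |⟨v, x⟩|) / |⟨v, y⟩|` (valued in `ℝ≥0∞`; a ratio with vanishing denominator is `∞`). -/
noncomputable def Lcal {n k : ℕ} (x : Fin n → (Fin k → ℝ)) : ℝ≥0∞ :=
  ⨅ (i : Fin n) (_ : x i ≠ 0) (v : Fin k → ℝ) (_ : v ≠ 0),
    ENNReal.ofReal ((∑ j, |v ⬝ᵥ x j|) / n) / ENNReal.ofReal |v ⬝ᵥ x i|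

/-- `𝒮𝓛(n, k)`: the supremum of `𝓛(μ)` over all `μ ∈ 𝒫(n, k)`, i.e. over all uniform
distributions on multisets of `n` vectors spanning `ℝ^k`. -/
noncomputable def SL (n k : ℕ) : ℝ≥0∞ :=
  ⨆ (x : Fin n → (Fin k → ℝ)) (_ : Submodule.span ℝ (Set.range x) = ⊤), Lcal x

open Set Module

lemma mem_zonotope {k n : ℕ} (x : Fin n → Fin k → ℝ) (y : Fin k → ℝ)
    (h : ∀ v : Fin k → ℝ, v ⬝ᵥ y ≤ ∑ j, |v ⬝ᵥ x j|) :
    ∃ c : Fin n → ℝ, (∀ j, |c j| ≤ 1) ∧ y = ∑ j, c j • x j := by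
  classical
  set ℓ : (Fin n → ℝ) →ₗ[ℝ] (Fin k → ℝ) :=
    { toFun := fun c => ∑ j, c j • x j
      map_add' := by intro a b; simp [add_smul, Finset.sum_add_distrib]
      map_smul' := by intro a b; simp [smul_smul, Finset.smul_sum] } with hℓ
  set K : Set (Fin n → ℝ) := Set.univ.pi fun _ => Set.Icc (-1 : ℝ) 1 with hK
  by_contra hy
  push_neg at hy
  have hyZ : y ∉ ℓ '' K := by
    rintro ⟨c, hc, hcy⟩
    refine hy c (fun j => abs_le.2 ⟨(hc j (Set.mem_univ j)).1, (hc j (Set.mem_univ j)).2⟩) ?_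
    simp [hℓ] at hcy
    exact hcy.symm
  have hconv : Convex ℝ (ℓ '' K) :=
    (convex_pi fun i _ => convex_Icc _ _).linear_image ℓ
  have hcomp : IsCompact (ℓ '' K) :=
    (isCompact_univ_pi fun i => isCompact_Icc).image ℓ.continuous_of_finiteDimensional
  obtain ⟨f, u, hfu, huy⟩ :=
    geometric_hahn_banach_closed_point hconv hcomp.isClosed hyZ
  -- represent f as dot product with v
  set v : Fin k → ℝ := fun r => f (fun j => if r = j then 1 else 0) with hv
  have hfv : ∀ w : Fin k → ℝ, f w = v ⬝ᵥ w := by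
    intro w
    conv_lhs => rw [pi_eq_sum_univ w]
    rw [map_sum]
    simp [dotProduct, hv, mul_comm]
  -- the extreme point of the zonotope in direction f
  set c : Fin n → ℝ := fun j => if f (x j) < 0 then -1 else 1 with hc
  have hcK : c ∈ K := by
    intro j _
    by_cases hj : f (x j) < 0 <;> simp [hc, hj]
  have hfc : f (ℓ c) = ∑ j, |f (x j)| := by
    simp only [hℓ, LinearMap.coe_mk, AddHom.coe_mk, map_sum, _root_.map_smul, smul_eq_mul]
    refine Finset.sum_congr rfl fun j _ => ?_
    by_cases hj : f (x j) < 0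
    · simp [hc, hj, abs_of_neg hj]
    · simp [hc, hj, abs_of_nonneg (not_lt.1 hj)]
  have h1 : ∑ j, |f (x j)| < u := hfc ▸ hfu _ ⟨c, hcK, rfl⟩
  have h2 : f y ≤ ∑ j, |f (x j)| := by
    have := h v
    rw [← hfv y] at this
    simpa only [hfv] using this
  linarith [huy]

lemma dot_linmap {k : ℕ} (v : Fin k → ℝ) :
    ∃ f : (Fin k → ℝ) →ₗ[ℝ] ℝ, ∀ w, f w = v ⬝ᵥ w :=
  ⟨{ toFun := fun w => v ⬝ᵥ w
     map_add' := fun a b => dotProduct_add v a b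
     map_smul' := fun a b => dotProduct_smul a v b }, fun _ => rfl⟩

lemma exists_dot_ne_zero {n k : ℕ} (x : Fin n → Fin k → ℝ)
    (hx : Submodule.span ℝ (Set.range x) = ⊤) {v : Fin k → ℝ} (hv : v ≠ 0) :
    ∃ j, v ⬝ᵥ x j ≠ 0 := by
  by_contra h
  push_neg at h
  obtain ⟨f, hf⟩ := dot_linmap v
  have hker : Submodule.span ℝ (Set.range x) ≤ LinearMap.ker f := by
    rw [Submodule.span_le]
    rintro w ⟨j, rfl⟩
    simp [LinearMap.mem_ker, hf, h j]
  rw [hx] at hker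
  have : f v = 0 := hker (Submodule.mem_top)
  rw [hf] at this
  exact hv (dotProduct_self_eq_zero.mp this)

lemma span_top_of_rows_indep {k n : ℕ} (b : Fin k → Fin n → ℝ)
    (hb : LinearIndependent ℝ b) :
    Submodule.span ℝ (Set.range fun j : Fin n => fun r : Fin k => b r j) = ⊤ := by
  set A : Matrix (Fin k) (Fin n) ℝ := Matrix.of b with hA
  have hx : (fun j : Fin n => fun r : Fin k => b r j) = Aᵀ := rfl
  apply Submodule.eq_top_of_finrank_eq
  rw [hx]
  have h1 : finrank ℝ (Submodule.span ℝ (Set.range Aᵀ)) = A.rank :=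
    (A.rank_eq_finrank_span_cols).symm
  have h2 : A.rank = Aᵀ.rank := (Matrix.rank_transpose A).symm
  have h3 : Aᵀ.rank = finrank ℝ (Submodule.span ℝ (Set.range Aᵀᵀ)) :=
    Aᵀ.rank_eq_finrank_span_cols
  have h4 : Aᵀᵀ = A := Matrix.transpose_transpose A
  rw [h1, h2, h3, h4]
  rw [show (Set.range A) = Set.range b from rfl, finrank_span_eq_card hb,
    Module.finrank_pi ℝ]

lemma rank_le_of_cols_rel {n k d : ℕ} (hkd : k + d = n)
    (x : Fin n → Fin k → ℝ) (hx : Submodule.span ℝ (Set.range x) = ⊤)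
    (B : Matrix (Fin n) (Fin n) ℝ) (hB : ∀ i, ∑ j, B j i • x j = 0) :
    B.rank ≤ d := by
  classical
  set X : Matrix (Fin k) (Fin n) ℝ := Matrix.of fun r j => x j r with hX
  have hXT : Xᵀ = x := rfl
  have hsurj : LinearMap.range X.mulVecLin = ⊤ := by
    rw [Matrix.range_mulVecLin]
    exact hx
  have hle : LinearMap.range B.mulVecLin ≤ LinearMap.ker X.mulVecLin := by
    rintro _ ⟨w, rfl⟩
    rw [LinearMap.mem_ker]
    funext r
    simp only [Matrix.mulVecLin_apply, Matrix.mulVec, dotProduct, Pi.zero_apply]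
    have : ∀ i, ∑ j, B j i * x j r = 0 := fun i => by
      have := congrFun (hB i) r
      simpa [Finset.sum_apply] using this
    calc ∑ j, X r j * ∑ i, B j i * w i
        = ∑ i, w i * ∑ j, B j i * x j r := by
          simp_rw [Finset.mul_sum]
          rw [Finset.sum_comm]
          refine Finset.sum_congr rfl fun i _ => Finset.sum_congr rfl fun j _ => ?_
          show x j r * (B j i * w i) = w i * (B j i * x j r)
          ring
      _ = 0 := by simp [this]
  have hkerr : finrank ℝ (LinearMap.ker X.mulVecLin) = d := by
    have := LinearMap.finrank_range_add_finrank_ker X.mulVecLin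
    rw [hsurj, finrank_top, Module.finrank_pi, Module.finrank_pi] at this
    simp at this
    omega
  calc B.rank = finrank ℝ (LinearMap.range B.mulVecLin) := rfl
    _ ≤ finrank ℝ (LinearMap.ker X.mulVecLin) := Submodule.finrank_mono hle
    _ = d := hkerr

lemma SL_ge {n k d : ℕ} (hkd : k + d = n) (hn : 0 < n) {ε : ℝ} (hε : 0 < ε)
    (B : Matrix (Fin n) (Fin n) ℝ) (hrank : B.rank ≤ d) (hdiag : ∀ i, B i i = 1)
    (hoff : ∀ i j, i ≠ j → |B i j| ≤ ε) :
    ENNReal.ofReal ((1 + ε) / (n * ε)) ≤ SL n k := by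
  classical
  have hn' : (0:ℝ) < n := Nat.cast_pos.2 hn
  have hrankT : Bᵀ.rank ≤ d := by rw [Matrix.rank_transpose]; exact hrank
  have hker : k ≤ finrank ℝ (LinearMap.ker Bᵀ.mulVecLin) := by
    have h1 := LinearMap.finrank_range_add_finrank_ker Bᵀ.mulVecLin
    have h2 : finrank ℝ (LinearMap.range Bᵀ.mulVecLin) ≤ d := hrankT
    rw [Module.finrank_pi] at h1
    simp only [Fintype.card_fin] at h1
    omega
  obtain ⟨b', hb'⟩ := exists_linearIndependent_of_le_finrank hker
  set b : Fin k → Fin n → ℝ := fun r => (b' r : Fin n → ℝ) with hbdef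
  have hb : LinearIndependent ℝ b :=
    hb'.map' (LinearMap.ker Bᵀ.mulVecLin).subtype (Submodule.ker_subtype _)
  set x : Fin n → Fin k → ℝ := fun j r => b r j with hxdef
  have hx : Submodule.span ℝ (Set.range x) = ⊤ := span_top_of_rows_indep b hb
  have hcol : ∀ (i : Fin n) (r : Fin k), ∑ j, B j i * x j r = 0 := by
    intro i r
    have hm : Bᵀ.mulVecLin (b r) = 0 := LinearMap.mem_ker.mp (b' r).2
    have h := congrFun hm i
    rw [Matrix.mulVecLin_apply] at h
    simp only [Pi.zero_apply] at h
    show ∑ j, B j i * b r j = 0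
    rw [← h]
    simp [Matrix.mulVec, dotProduct, Matrix.transpose_apply, mul_comm]
  have key : ∀ (i : Fin n) (v : Fin k → ℝ),
      (1 + ε) * |v ⬝ᵥ x i| ≤ ε * ∑ j, |v ⬝ᵥ x j| := by
    intro i v
    have h0 : ∑ j, B j i * (v ⬝ᵥ x j) = 0 := by
      have heq : ∑ j, B j i * (v ⬝ᵥ x j) = ∑ r, v r * ∑ j, B j i * x j r := by
        simp_rw [dotProduct, Finset.mul_sum]
        rw [Finset.sum_comm]
        exact Finset.sum_congr rfl fun r _ => Finset.sum_congr rfl fun j _ => by ring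
      rw [heq]
      simp [hcol]
    have hadd := Finset.add_sum_erase Finset.univ
      (fun j => B j i * (v ⬝ᵥ x j)) (Finset.mem_univ i)
    beta_reduce at hadd
    rw [hdiag i, one_mul] at hadd
    rw [h0] at hadd
    have h1 : v ⬝ᵥ x i = -∑ j ∈ Finset.univ.erase i, B j i * (v ⬝ᵥ x j) := by
      linarith
    have h2 : |v ⬝ᵥ x i| ≤ ∑ j ∈ Finset.univ.erase i, ε * |v ⬝ᵥ x j| := by
      rw [h1, abs_neg]
      refine (Finset.abs_sum_le_sum_abs _ _).trans (Finset.sum_le_sum fun j hj => ?_)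
      rw [abs_mul]
      exact mul_le_mul_of_nonneg_right (hoff j i (Finset.ne_of_mem_erase hj)) (abs_nonneg _)
    have h3 : ∑ j ∈ Finset.univ.erase i, |v ⬝ᵥ x j|
        = (∑ j, |v ⬝ᵥ x j|) - |v ⬝ᵥ x i| :=
      Finset.sum_erase_eq_sub (Finset.mem_univ i)
    rw [← Finset.mul_sum, h3] at h2
    linarith
  have hLcal : ENNReal.ofReal ((1 + ε) / (n * ε)) ≤ Lcal x := by
    refine le_iInf fun i => le_iInf fun hxi => le_iInf fun v => le_iInf fun hv => ?_
    have hsum : 0 < ∑ j, |v ⬝ᵥ x j| := by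
      obtain ⟨j, hj⟩ := exists_dot_ne_zero x hx hv
      exact Finset.sum_pos' (fun _ _ => abs_nonneg _)
        ⟨j, Finset.mem_univ j, abs_pos.2 hj⟩
    by_cases hvi : v ⬝ᵥ x i = 0
    · rw [hvi]
      simp only [abs_zero, ENNReal.ofReal_zero]
      rw [ENNReal.div_zero (ENNReal.ofReal_pos.2 (by positivity)).ne']
      exact le_top
    · rw [ENNReal.le_div_iff_mul_le
        (Or.inl (ENNReal.ofReal_pos.2 (abs_pos.2 hvi)).ne')
        (Or.inl ENNReal.ofReal_ne_top),
        ← ENNReal.ofReal_mul (by positivity)]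
      apply ENNReal.ofReal_le_ofReal
      rw [div_mul_eq_mul_div, div_le_div_iff₀ (by positivity) hn']
      nlinarith [key i v, abs_nonneg (v ⬝ᵥ x i), hsum]
  exact hLcal.trans (le_iSup₂ (f := fun x (_ : Submodule.span ℝ (Set.range x) = ⊤) => Lcal x) x hx)

lemma SL_le_one {n k : ℕ} (hn : 0 < n) (hk : 0 < k) : SL n k ≤ 1 := by
  refine iSup₂_le fun x hx => ?_
  have hv : (fun _ : Fin k => (1:ℝ)) ≠ 0 := by
    intro h
    have := congrFun h ⟨0, hk⟩
    norm_num at this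
  obtain ⟨j0, hj0⟩ := exists_dot_ne_zero x hx hv
  obtain ⟨i, -, hi⟩ := Finset.exists_max_image Finset.univ
    (fun i => |(fun _ : Fin k => (1:ℝ)) ⬝ᵥ x i|) ⟨j0, Finset.mem_univ j0⟩
  set v : Fin k → ℝ := fun _ => 1 with hvdef
  have hvi : 0 < |v ⬝ᵥ x i| := lt_of_lt_of_le (abs_pos.2 hj0) (hi j0 (Finset.mem_univ j0))
  have hxi : x i ≠ 0 := by
    intro h
    rw [h] at hvi
    simp at hvi
  refine le_trans (iInf_le_of_le i (iInf_le_of_le hxi (iInf_le_of_le v (iInf_le_of_le hv le_rfl)))) ?_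
  apply ENNReal.div_le_of_le_mul
  rw [one_mul]
  apply ENNReal.ofReal_le_ofReal
  rw [div_le_iff₀ (by positivity : (0:ℝ) < n)]
  calc ∑ j, |v ⬝ᵥ x j| ≤ ∑ _j : Fin n, |v ⬝ᵥ x i| :=
        Finset.sum_le_sum fun j _ => hi j (Finset.mem_univ j)
    _ = |v ⬝ᵥ x i| * n := by rw [Finset.sum_const]; simp [mul_comm]

lemma construction {n k d : ℕ} (hkd : k + d = n) (hn : 0 < n) {L : ℝ} (hL : 1 < n * L)
    (x : Fin n → Fin k → ℝ) (hx : Submodule.span ℝ (Set.range x) = ⊤)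
    (hineq : ∀ (i : Fin n) (v : Fin k → ℝ), n * L * |v ⬝ᵥ x i| ≤ ∑ j, |v ⬝ᵥ x j|) :
    ∃ B : Matrix (Fin n) (Fin n) ℝ, B.rank ≤ d ∧ (∀ i, B i i = 1) ∧
      ∀ i j, i ≠ j → |B i j| ≤ (n * L - 1)⁻¹ := by
  classical
  have hcz : ∀ i, ∃ c : Fin n → ℝ, (∀ j, |c j| ≤ 1) ∧ (n * L) • x i = ∑ j, c j • x j := by
    intro i
    apply mem_zonotope
    intro v
    have h1 : v ⬝ᵥ ((n * L) • x i) = (n * L) * (v ⬝ᵥ x i) := by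
      rw [dotProduct_smul]; simp
    rw [h1]
    calc (n*L) * (v ⬝ᵥ x i) ≤ (n*L) * |v ⬝ᵥ x i| :=
          mul_le_mul_of_nonneg_left (le_abs_self _) (by linarith)
      _ ≤ _ := hineq i v
  choose c hc1 hc2 using hcz
  set D : Fin n → ℝ := fun i => n * L - c i i with hDdef
  have hD1 : ∀ i, n * L - 1 ≤ D i := fun i => by
    have := (abs_le.1 (hc1 i i)).2
    simp only [hDdef]
    linarith
  have hDpos : ∀ i, 0 < D i := fun i => lt_of_lt_of_le (by linarith) (hD1 i)
  set B : Matrix (Fin n) (Fin n) ℝ :=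
    Matrix.of fun j i => if j = i then 1 else -(c i j) / D i with hBdef
  have hdiag : ∀ i, B i i = 1 := fun i => by simp [hBdef]
  have hoff : ∀ i j, i ≠ j → |B i j| ≤ (n*L-1)⁻¹ := by
    intro i j hij
    have hBij : B i j = -(c j i)/D j := by simp [hBdef, hij]
    rw [hBij, abs_div, abs_neg, abs_of_pos (hDpos j), inv_eq_one_div]
    exact div_le_div₀ (by norm_num) (hc1 j i) (by linarith) (hD1 j)
  refine ⟨B, ?_, hdiag, hoff⟩
  apply rank_le_of_cols_rel hkd x hx
  intro i
  have herase : ∑ j ∈ Finset.univ.erase i, c i j • x j = D i • x i := by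
    have hadd := Finset.add_sum_erase Finset.univ (fun j => c i j • x j) (Finset.mem_univ i)
    beta_reduce at hadd
    have h2 := hc2 i
    rw [← hadd] at h2
    show ∑ j ∈ Finset.univ.erase i, c i j • x j = ((n : ℝ) * L - c i i) • x i
    rw [sub_smul, h2]
    abel
  have hsplit := Finset.add_sum_erase Finset.univ (fun j => B j i • x j) (Finset.mem_univ i)
  beta_reduce at hsplit
  rw [← hsplit, hdiag i, one_smul]
  have : ∑ j ∈ Finset.univ.erase i, B j i • x j = -x i := by
    have hterm : ∀ j ∈ Finset.univ.erase i, B j i • x j = (-(D i)⁻¹) • (c i j • x j) := by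
      intro j hj
      have : B j i = -(c i j) / D i := by
        simp [hBdef, Finset.ne_of_mem_erase hj]
      rw [this, smul_smul]
      congr 1
      field_simp
    rw [Finset.sum_congr rfl hterm, ← Finset.smul_sum, herase, smul_smul]
    rw [neg_mul, inv_mul_cancel₀ (hDpos i).ne']
    simp
  rw [this]
  simp

/-- For all positive integers `n, d` with `1 ≤ d < n`,
`off(n, d) = 1 / (n · 𝒮𝓛(n, n − d) − 1)`. -/
theorem off_eq_inv_n_mul_SL_sub_one (n d : ℕ) (hd : 1 ≤ d) (hdn : d < n) :
    ENNReal.ofReal (off n d) = 1 / ((n : ℝ≥0∞) * SL n (n - d) - 1) := by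
  rw [off]
  classical
  set S : Set ℝ := {ε : ℝ | 0 ≤ ε ∧ ∃ B : Matrix (Fin n) (Fin n) ℝ,
      B.rank ≤ d ∧ (∀ i, B i i = 1) ∧ ∀ i j, i ≠ j → |B i j| ≤ ε} with hSdef
  set k := n - d with hkdef
  have hkd : k + d = n := by omega
  have hk : 0 < k := by omega
  have hn : 0 < n := by omega
  have hn' : (0:ℝ) < n := Nat.cast_pos.2 hn
  -- the all-ones matrix
  set J : Matrix (Fin n) (Fin n) ℝ := Matrix.of fun _ _ => (1:ℝ) with hJdef
  have hJrank : J.rank ≤ d := by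
    have hle : LinearMap.range J.mulVecLin ≤ ℝ ∙ (fun _ : Fin n => (1:ℝ)) := by
      rintro _ ⟨w, rfl⟩
      rw [Submodule.mem_span_singleton]
      refine ⟨∑ j, w j, ?_⟩
      funext i
      simp [Matrix.mulVecLin_apply, Matrix.mulVec, dotProduct, hJdef]
    have h1 : J.rank ≤ finrank ℝ (ℝ ∙ (fun _ : Fin n => (1:ℝ))) :=
      Submodule.finrank_mono hle
    have h2 : finrank ℝ (ℝ ∙ (fun _ : Fin n => (1:ℝ))) = 1 :=
      finrank_span_singleton (by
        intro h
        have := congrFun h ⟨0, hn⟩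
        norm_num at this)
    omega
  have hJdiag : ∀ i, J i i = 1 := fun _ => rfl
  have hJoff : ∀ i j : Fin n, i ≠ j → |J i j| ≤ (1:ℝ) := fun _ _ _ => by
    simp [hJdef]
  have hJ : (1:ℝ) ∈ S := ⟨zero_le_one, J, hJrank, hJdiag, hJoff⟩
  have hbdd : BddBelow S := ⟨0, fun ε hε => hε.1⟩
  set s := SL n k with hsdef
  have hs1 : s ≤ 1 := SL_le_one hn hk
  have hstop : s ≠ ⊤ := (hs1.trans_lt ENNReal.one_lt_top).ne
  have hs2 : ENNReal.ofReal (2 / n) ≤ s := by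
    have := SL_ge hkd hn one_pos J hJrank hJdiag hJoff
    norm_num at this ⊢
    exact this
  set sr := s.toReal with hsrdef
  have hsr2 : 2 / (n:ℝ) ≤ sr :=
    (ENNReal.ofReal_le_iff_le_toReal hstop).1 hs2
  have hnsr : 2 ≤ (n:ℝ) * sr := by
    rw [div_le_iff₀ hn'] at hsr2
    linarith [mul_comm sr (n:ℝ)]
  have hc_pos : (0:ℝ) < n * sr - 1 := by linarith
  -- real equality
  have hoff_eq : sInf S = ((n:ℝ) * sr - 1)⁻¹ := by
    apply le_antisymm
    · -- upper bound
      refine le_of_forall_gt_imp_ge_of_dense fun t ht => ?_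
      have ht0 : 0 < t := lt_trans (inv_pos.2 hc_pos) ht
      have h1t : 1 < t * ((n:ℝ)*sr - 1) := by
        rw [← one_div, div_lt_iff₀ hc_pos] at ht
        exact ht
      have hlt : (1 + 1/t)/(n:ℝ) < sr := by
        have h2 : 1/t < (n:ℝ)*sr - 1 := by
          rw [div_lt_iff₀ ht0]
          nlinarith
        rw [div_lt_iff₀ hn']
        nlinarith
      obtain ⟨L, hL1, hL2⟩ := exists_between hlt
      have hL0 : 0 < L := by
        have : (0:ℝ) < (1 + 1/t)/(n:ℝ) := by positivity
        linarith
      have hnL : 1 < (n:ℝ) * L := by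
        rw [div_lt_iff₀ hn'] at hL1
        have : 0 < 1/t := by positivity
        nlinarith
      have hLs : ENNReal.ofReal L < s := by
        rw [hsrdef] at hL2
        exact (ENNReal.ofReal_lt_iff_lt_toReal hL0.le hstop).2 hL2
      rw [hsdef, SL, lt_iSup_iff] at hLs
      obtain ⟨x, hx'⟩ := hLs
      rw [lt_iSup_iff] at hx'
      obtain ⟨hx, hLx⟩ := hx'
      have hineq : ∀ (i : Fin n) (v : Fin k → ℝ),
          (n:ℝ) * L * |v ⬝ᵥ x i| ≤ ∑ j, |v ⬝ᵥ x j| := by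
        intro i v
        by_cases hv : v = 0
        · subst hv
          simp [zero_dotProduct]
        by_cases hxi : x i = 0
        · rw [hxi, dotProduct_zero]
          simp only [abs_zero, mul_zero]
          positivity
        have hterm : ENNReal.ofReal L ≤
            ENNReal.ofReal ((∑ j, |v ⬝ᵥ x j|) / n) / ENNReal.ofReal |v ⬝ᵥ x i| :=
          hLx.le.trans (iInf_le_of_le i (iInf_le_of_le hxi
            (iInf_le_of_le v (iInf_le_of_le hv le_rfl))))
        by_cases hvi : v ⬝ᵥ x i = 0
        · rw [hvi]
          simp only [abs_zero, mul_zero]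
          positivity
        rw [ENNReal.le_div_iff_mul_le
            (Or.inl (ENNReal.ofReal_pos.2 (abs_pos.2 hvi)).ne')
            (Or.inl ENNReal.ofReal_ne_top),
          ← ENNReal.ofReal_mul hL0.le] at hterm
        have h4 : L * |v ⬝ᵥ x i| ≤ (∑ j, |v ⬝ᵥ x j|) / n :=
          (ENNReal.ofReal_le_ofReal_iff (by positivity)).1 hterm
        rw [le_div_iff₀ hn'] at h4
        nlinarith
      obtain ⟨B, hBrank, hBdiag, hBoff⟩ := construction hkd hn hnL x hx hineq
      have hmem : ((n:ℝ)*L - 1)⁻¹ ∈ S :=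
        ⟨inv_nonneg.2 (by linarith), B, hBrank, hBdiag, hBoff⟩
      refine (csInf_le hbdd hmem).trans ?_
      have h3 : 1/t < (n:ℝ)*L - 1 := by
        rw [div_lt_iff₀ hn'] at hL1
        have h5 : 1/t / t ≤ 1/t/t := le_rfl
        nlinarith
      have h6 := one_div_lt_one_div_of_lt (by positivity : (0:ℝ) < 1/t) h3
      rw [one_div_one_div] at h6
      rw [← one_div]
      exact h6.le
    · -- lower bound
      refine le_csInf ⟨1, hJ⟩ fun ε hε => ?_
      obtain ⟨hε0, B, hr, hdg, hof⟩ := hε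
      have hεpos : 0 < ε := by
        rcases lt_or_eq_of_le hε0 with h | h
        · exact h
        · exfalso
          have hB1 : B = 1 := by
            ext i j
            by_cases hij : i = j
            · subst hij; simp [hdg i, Matrix.one_apply_eq]
            · have := hof i j hij
              rw [← h] at this
              have hz : B i j = 0 := abs_nonpos_iff.1 this
              rw [hz, Matrix.one_apply_ne hij]
          rw [hB1, Matrix.rank_one] at hr
          simp only [Fintype.card_fin] at hr
          omega
      have hge := SL_ge hkd hn hεpos B hr hdg hof
      have h7 : (1 + ε) / ((n:ℝ) * ε) ≤ sr :=
        (ENNReal.ofReal_le_iff_le_toReal hstop).1 hge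
      rw [div_le_iff₀ (by positivity)] at h7
      rw [inv_eq_one_div, div_le_iff₀ hc_pos]
      nlinarith
  -- assemble in ℝ≥0∞
  have hconv : ((n : ℝ≥0∞) * SL n k - 1) = ENNReal.ofReal ((n:ℝ) * sr - 1) := by
    rw [← hsdef, ← ENNReal.ofReal_toReal hstop, ← hsrdef,
      show ((n : ℝ≥0∞)) = ENNReal.ofReal (n:ℝ) by simp,
      ← ENNReal.ofReal_mul hn'.le,
      ENNReal.ofReal_sub _ zero_le_one, ENNReal.ofReal_one]
  rw [hconv, one_div, ← ENNReal.ofReal_inv_of_pos hc_pos, hoff_eq]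
end

section
/- For all integers n ≥ k > 0, (1 + 1/Align(n,k))/n = 𝒮𝓛(n,k). -/
open scoped ENNReal BigOperators
open Matrix

/-- `Al_i(a)` for a vector `a ∈ ℝⁿ`: `|a i| / ∑_{j ≠ i} |a j|`, valued in `ℝ≥0∞`
(so that it is `∞` when the denominator vanishes but the numerator does not). -/
noncomputable def Ali {n : ℕ} (i : Fin n) (a : Fin n → ℝ) : ℝ≥0∞ :=
  ENNReal.ofReal |a i| / ENNReal.ofReal (∑ j ∈ Finset.univ.erase i, |a j|)

/-- `Al_i(A)` for a linear subspace `A ⊆ ℝⁿ`: the supremum of `Al_i(a)` over nonzero `a ∈ A`. -/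
noncomputable def AliSub {n : ℕ} (i : Fin n) (A : Submodule ℝ (Fin n → ℝ)) : ℝ≥0∞ :=
  ⨆ (a : Fin n → ℝ) (_ : a ∈ A) (_ : a ≠ 0), Ali i a

/-- `Al(A)`: the maximum of `Al_i(A)` over all coordinates `i`. -/
noncomputable def AlSub {n : ℕ} (A : Submodule ℝ (Fin n → ℝ)) : ℝ≥0∞ :=
  ⨆ i : Fin n, AliSub i A

/-- `Align(n, k)`: the infimum of `Al(A)` over all linear subspaces `A ⊆ ℝⁿ` of dimension
at least `k`. -/
noncomputable def Align (n k : ℕ) : ℝ≥0∞ :=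
  ⨅ (A : Submodule ℝ (Fin n → ℝ)) (_ : k ≤ Module.finrank ℝ A), AlSub A

/-! ### Auxiliary machinery -/

/-- The decreasing function `t ↦ (1 + 1/t)/n`. -/
noncomputable def ff (n : ℕ) (t : ℝ≥0∞) : ℝ≥0∞ := (1 + 1 / t) / n

section ffsec

variable {n k : ℕ}

lemma ff_zero (hn : n ≠ 0) : ff n 0 = ⊤ := by
  unfold ff
  rw [ENNReal.div_zero one_ne_zero, add_top,
    ENNReal.top_div_of_ne_top (ENNReal.natCast_ne_top n)]

lemma ff_antitone : Antitone (ff n) := by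
  intro a b h
  unfold ff
  refine ENNReal.div_le_div_right (add_le_add_right ?_ 1) _
  rw [one_div, one_div]
  exact ENNReal.inv_le_inv.2 h

lemma ff_iSup (hn : n ≠ 0) {ι : Sort*} (s : ι → ℝ≥0∞) :
    ff n (⨆ i, s i) = ⨅ i, ff n (s i) := by
  cases isEmpty_or_nonempty ι
  · rw [iSup_of_empty, iInf_of_empty]
    exact ff_zero hn
  · unfold ff
    simp_rw [one_div]
    rw [ENNReal.inv_iSup, ENNReal.add_iInf,
      ENNReal.iInf_div_of_ne (Nat.cast_ne_zero.mpr hn) (ENNReal.natCast_ne_top n)]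

lemma ff_iInf {ι : Sort*} [Nonempty ι] (s : ι → ℝ≥0∞) :
    ff n (⨅ i, s i) = ⨆ i, ff n (s i) := by
  unfold ff
  simp_rw [one_div]
  rw [ENNReal.inv_iInf, ENNReal.add_iSup, ENNReal.iSup_div]

lemma ff_Ali (hn : n ≠ 0) {a : Fin n → ℝ} (i : Fin n) (ha : a ≠ 0) :
    ff n (Ali i a) = ENNReal.ofReal ((∑ j, |a j|) / n) / ENNReal.ofReal |a i| := by
  have hnR : (0:ℝ) < n := by exact_mod_cast Nat.pos_of_ne_zero hn
  have hS : 0 < ∑ j, |a j| := by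
    obtain ⟨j0, hj0⟩ := Function.ne_iff.mp ha
    exact Finset.sum_pos' (fun j _ => abs_nonneg _) ⟨j0, Finset.mem_univ _, abs_pos.mpr hj0⟩
  have hsplit : ∑ j, |a j| = |a i| + ∑ j ∈ Finset.univ.erase i, |a j| :=
    (Finset.add_sum_erase _ _ (Finset.mem_univ i)).symm
  have hT0 : 0 ≤ ∑ j ∈ Finset.univ.erase i, |a j| := Finset.sum_nonneg fun j _ => abs_nonneg _
  by_cases hai : a i = 0
  · have h0 : Ali i a = 0 := by simp [Ali, hai]
    rw [h0, ff_zero hn]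
    symm
    rw [hai, abs_zero, ENNReal.ofReal_zero]
    refine ENNReal.div_zero ?_
    rw [Ne, ENNReal.ofReal_eq_zero]
    push_neg
    positivity
  · have hai' : (0:ℝ) < |a i| := abs_pos.mpr hai
    have hne0 : ENNReal.ofReal |a i| ≠ 0 := by
      rw [Ne, ENNReal.ofReal_eq_zero]; push_neg; exact hai'
    unfold ff Ali
    rw [one_div, ENNReal.inv_div (Or.inl ENNReal.ofReal_ne_top) (Or.inr hne0)]
    rw [show (1:ℝ≥0∞) = ENNReal.ofReal |a i| / ENNReal.ofReal |a i| from
      (ENNReal.div_self hne0 ENNReal.ofReal_ne_top).symm]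
    rw [ENNReal.div_add_div_same, ← ENNReal.ofReal_add (abs_nonneg _) hT0, ← hsplit]
    rw [ENNReal.ofReal_div_of_pos hnR, ENNReal.ofReal_natCast]
    rw [div_eq_mul_inv, div_eq_mul_inv, div_eq_mul_inv, div_eq_mul_inv, mul_right_comm]

end ffsec

section mainsec

variable {n k : ℕ}

lemma span_top_iff_inj (x : Fin n → Fin k → ℝ) :
    Submodule.span ℝ (Set.range x) = ⊤ ↔ Function.Injective (Matrix.of x).mulVecLin := by
  have h1 : Submodule.span ℝ (Set.range x) = LinearMap.range ((Matrix.of x)ᵀ).mulVecLin := by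
    rw [Matrix.range_mulVecLin]
    rfl
  have hrn := LinearMap.finrank_range_add_finrank_ker (Matrix.of x).mulVecLin
  rw [Module.finrank_fin_fun] at hrn
  have hker : Function.Injective (Matrix.of x).mulVecLin ↔
      Module.finrank ℝ (LinearMap.ker (Matrix.of x).mulVecLin) = 0 := by
    rw [← LinearMap.ker_eq_bot, ← Submodule.finrank_eq_zero]
  have htr : ((Matrix.of x)ᵀ).rank = (Matrix.of x).rank := Matrix.rank_transpose _
  constructor
  · intro h
    have h2 : ((Matrix.of x)ᵀ).rank = k := by
      rw [Matrix.rank, ← h1, h, finrank_top, Module.finrank_fin_fun]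
    have h3 : (Matrix.of x).rank = k := by rw [← htr]; exact h2
    rw [Matrix.rank] at h3
    rw [hker]
    omega
  · intro h
    rw [hker] at h
    have hr : (Matrix.of x).rank = k := by rw [Matrix.rank]; omega
    have h2 : ((Matrix.of x)ᵀ).rank = k := by rw [htr]; exact hr
    rw [Matrix.rank] at h2
    rw [h1]
    apply Submodule.eq_top_of_finrank_eq
    rw [Module.finrank_fin_fun]
    exact h2

lemma exists_spanning_le (A : Submodule ℝ (Fin n → ℝ)) (hA : k ≤ Module.finrank ℝ A) :
    ∃ x : Fin n → Fin k → ℝ, Submodule.span ℝ (Set.range x) = ⊤ ∧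
      LinearMap.range (Matrix.of x).mulVecLin ≤ A := by
  obtain ⟨f, hf⟩ := exists_linearIndependent_of_le_finrank (R := ℝ) (M := A) hA
  have hy : LinearIndependent ℝ (fun i => (f i : Fin n → ℝ)) :=
    hf.map' A.subtype (Submodule.ker_subtype A)
  have hMv : ∀ v : Fin k → ℝ,
      (Matrix.of fun j i => (f i : Fin n → ℝ) j).mulVecLin v = ∑ i, v i • (f i : Fin n → ℝ) := by
    intro v
    ext j
    simp [Matrix.mulVecLin_apply, Matrix.mulVec, dotProduct, Finset.sum_apply, mul_comm]
  refine ⟨fun j i => (f i : Fin n → ℝ) j, ?_, ?_⟩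
  · rw [span_top_iff_inj, ← LinearMap.ker_eq_bot, LinearMap.ker_eq_bot']
    intro v hv
    rw [hMv] at hv
    exact funext fun i => Fintype.linearIndependent_iff.mp hy v hv i
  · rintro a ⟨v, rfl⟩
    rw [hMv]
    exact Submodule.sum_mem _ fun i _ => Submodule.smul_mem _ _ (f i).2

lemma AlSub_mono {A B : Submodule ℝ (Fin n → ℝ)} (h : A ≤ B) : AlSub A ≤ AlSub B := by
  unfold AlSub AliSub
  exact iSup_mono fun i => iSup_mono fun a => iSup_le fun ha => le_iSup_of_le (h ha) le_rfl

lemma Lcal_eq (hn : n ≠ 0) {x : Fin n → Fin k → ℝ}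
    (hx : Function.Injective (Matrix.of x).mulVecLin) :
    Lcal x = ff n (AlSub (LinearMap.range (Matrix.of x).mulVecLin)) := by
  set M := (Matrix.of x).mulVecLin with hM
  have hMapp : ∀ (v : Fin k → ℝ) (j : Fin n), M v j = v ⬝ᵥ x j := by
    intro v j
    simp [hM, Matrix.mulVecLin_apply, Matrix.mulVec, dotProduct, mul_comm]
  rw [AlSub, ff_iSup hn]
  unfold Lcal
  refine iInf_congr fun i => ?_
  have hAli : AliSub i (LinearMap.range M) = ⨆ (v : Fin k → ℝ) (_ : v ≠ 0), Ali i (M v) := by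
    apply le_antisymm
    · refine iSup_le fun a => iSup_le fun hmem => iSup_le fun h0 => ?_
      obtain ⟨v, rfl⟩ := hmem
      have hv : v ≠ 0 := by rintro rfl; exact h0 (map_zero M)
      exact le_iSup_of_le v (le_iSup_of_le hv le_rfl)
    · refine iSup_le fun v => iSup_le fun hv => ?_
      have h0 : M v ≠ 0 := fun h => hv (hx (by rw [h, map_zero]))
      exact le_iSup_of_le (M v)
        (le_iSup_of_le (LinearMap.mem_range_self M v) (le_iSup_of_le h0 le_rfl))
  rw [hAli]
  simp only [ff_iSup hn]
  by_cases hxi : x i = 0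
  · rw [iInf_neg (not_not.mpr hxi)]
    symm
    rw [iInf_eq_top]
    intro v
    rw [iInf_eq_top]
    intro hv
    have h0 : Ali i (M v) = 0 := by
      simp [Ali, hMapp v i, hxi]
    rw [h0, ff_zero hn]
  · rw [iInf_pos hxi]
    refine iInf_congr fun v => iInf_congr fun hv => ?_
    have h0 : M v ≠ 0 := fun h => hv (hx (by rw [h, map_zero]))
    rw [ff_Ali hn i h0]
    simp_rw [hMapp]

end mainsec

/-- For all integers `n ≥ k > 0`, `(1 + 1 / Align(n, k)) / n = 𝒮𝓛(n, k)`. -/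
theorem one_add_inv_Align_div_n_eq_SL (n k : ℕ) (hk : 0 < k) (hkn : k ≤ n) :
    (1 + 1 / Align n k) / (n : ℝ≥0∞) = SL n k := by
  have hn : n ≠ 0 := by omega
  haveI hne : Nonempty {A : Submodule ℝ (Fin n → ℝ) // k ≤ Module.finrank ℝ A} :=
    ⟨⟨⊤, by rw [finrank_top, Module.finrank_fin_fun]; exact hkn⟩⟩
  have hAlign : Align n k
      = ⨅ A : {A : Submodule ℝ (Fin n → ℝ) // k ≤ Module.finrank ℝ A}, AlSub A.1 := by
    rw [Align, iInf_subtype']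
  have hSL : SL n k
      = ⨆ x : {x : Fin n → Fin k → ℝ // Submodule.span ℝ (Set.range x) = ⊤}, Lcal x.1 := by
    rw [SL, iSup_subtype']
  have key : (1 + 1 / Align n k) / (n : ℝ≥0∞) = ff n (Align n k) := rfl
  rw [key, hAlign, ff_iInf, hSL]
  apply le_antisymm
  · refine iSup_le fun A => ?_
    obtain ⟨x, hx, hle⟩ := exists_spanning_le A.1 A.2
    calc ff n (AlSub A.1)
        ≤ ff n (AlSub (LinearMap.range (Matrix.of x).mulVecLin)) :=
          ff_antitone (AlSub_mono hle)
      _ = Lcal x := (Lcal_eq hn ((span_top_iff_inj x).mp hx)).symm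
      _ ≤ _ := le_iSup (fun x : {x : Fin n → Fin k → ℝ //
            Submodule.span ℝ (Set.range x) = ⊤} => Lcal x.1) ⟨x, hx⟩
  · refine iSup_le fun x => ?_
    have hinj := (span_top_iff_inj x.1).mp x.2
    rw [Lcal_eq hn hinj]
    refine le_iSup_of_le ⟨LinearMap.range (Matrix.of x.1).mulVecLin, ?_⟩ le_rfl
    rw [LinearMap.finrank_range_of_inj hinj, Module.finrank_fin_fun]
end

section
/- Let 1 ≤ d < n be integers and let A ⊆ ℝⁿ be a linear subspace of dimension n − d such that Al_i(A) is finite for every i ∈ {1,…,n}. Then there exists a real n×n matrix G such that: (1) G has rank at most d; (2) G_ii = 1 for all 1 ≤ i ≤ n; (3) |G_ij| ≤ Al_i(A) for all i ≠ j; and (4) G·a = 0 for every a ∈ A. -/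
open scoped ENNReal BigOperators
open Matrix

/-- Let `1 ≤ d < n` and let `A ⊆ ℝⁿ` be a linear subspace of dimension `n − d` such that
`Al_i(A)` is finite for every `i`. Then there is a real `n × n` matrix `G` with
(1) rank at most `d`; (2) unit diagonal; (3) `|G i j| ≤ Al_i(A)` for `i ≠ j`;
and (4) `G ⬝ a = 0` for every `a ∈ A`. -/
theorem exists_dual_matrix (n d : ℕ) (hd : 1 ≤ d) (hdn : d < n)
    (A : Submodule ℝ (Fin n → ℝ)) (hdim : Module.finrank ℝ A = n - d)
    (hfin : ∀ i : Fin n, AliSub i A ≠ ⊤) :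
    ∃ G : Matrix (Fin n) (Fin n) ℝ,
      G.rank ≤ d ∧
      (∀ i, G i i = 1) ∧
      (∀ i j, i ≠ j → ENNReal.ofReal |G i j| ≤ AliSub i A) ∧
      ∀ a ∈ A, G.mulVec a = 0 := by
  classical
  set α : Fin n → ℝ := fun i => (AliSub i A).toReal with hα
  have hα0 : ∀ i, 0 ≤ α i := fun i => ENNReal.toReal_nonneg
  -- the key bound
  have bound : ∀ i : Fin n, ∀ a ∈ A, |a i| ≤ α i * ∑ j ∈ Finset.univ.erase i, |a j| := by
    intro i a ha
    rcases eq_or_ne a 0 with rfl | hne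
    · simp [mul_nonneg (hα0 i) (Finset.sum_nonneg fun _ _ => abs_nonneg _)]
    have h1 : Ali i a ≤ AliSub i A :=
      le_iSup_of_le a (le_iSup_of_le ha (le_iSup_of_le hne le_rfl))
    set S := ∑ j ∈ Finset.univ.erase i, |a j| with hS
    have hS0 : 0 ≤ S := Finset.sum_nonneg fun _ _ => abs_nonneg _
    rcases eq_or_lt_of_le hS0 with hSz | hSpos
    · -- S = 0 forces a i = 0
      have hai : a i = 0 := by
        by_contra hai
        have : Ali i a = ⊤ := by
          rw [Ali, ← hS, ← hSz, ENNReal.ofReal_zero]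
          refine ENNReal.div_zero ?_
          simp [ENNReal.ofReal_eq_zero, abs_pos.mpr hai, not_le]
          exact hai
        exact hfin i (top_le_iff.mp (this ▸ h1))
      simp [hai, ← hSz]
    · have hdiv : ENNReal.ofReal |a i| / ENNReal.ofReal S ≤ AliSub i A := h1
      have h2 : ENNReal.ofReal |a i| ≤ AliSub i A * ENNReal.ofReal S := by
        rw [ENNReal.div_le_iff_le_mul (Or.inl (by simp [hSpos])) (Or.inl ENNReal.ofReal_ne_top)]
          at hdiv
        exact hdiv
      have h3 := ENNReal.toReal_mono (by
        exact ENNReal.mul_ne_top (hfin i) ENNReal.ofReal_ne_top) h2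
      rwa [ENNReal.toReal_ofReal (abs_nonneg _), ENNReal.toReal_mul,
        ENNReal.toReal_ofReal hS0] at h3
  -- Hahn–Banach extension for each i
  have key : ∀ i : Fin n, ∃ g : (Fin n → ℝ) →ₗ[ℝ] ℝ,
      (∀ a ∈ A, g a = a i) ∧ ∀ x, |g x| ≤ α i * ∑ j ∈ Finset.univ.erase i, |x j| := by
    intro i
    set N : (Fin n → ℝ) → ℝ := fun x => α i * ∑ j ∈ Finset.univ.erase i, |x j| with hN
    have hNneg : ∀ x, N (-x) = N x := by intro x; simp [hN]
    have hNnn : ∀ x, 0 ≤ N x :=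
      fun x => mul_nonneg (hα0 i) (Finset.sum_nonneg fun _ _ => abs_nonneg _)
    obtain ⟨g, hg1, hg2⟩ := exists_extension_of_le_sublinear
      ⟨A, (LinearMap.proj i).comp A.subtype⟩ N
      (by
        intro c hc x
        simp only [hN, Pi.smul_apply, smul_eq_mul, abs_mul, abs_of_pos hc,
          ← Finset.mul_sum]
        ring)
      (by
        intro x y
        simp only [hN, ← mul_add, ← Finset.sum_add_distrib]
        exact mul_le_mul_of_nonneg_left
          (Finset.sum_le_sum fun j _ => abs_add_le _ _) (hα0 i))
      (by
        intro x
        exact le_trans (le_abs_self _) (bound i x.1 x.2))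
    refine ⟨g, fun a ha => hg1 ⟨a, ha⟩, fun x => abs_le.mpr ⟨?_, hg2 x⟩⟩
    have h' : -g x ≤ α i * ∑ j ∈ Finset.univ.erase i, |x j| := by
      have := hg2 (-x)
      rw [map_neg, hNneg] at this
      exact this
    linarith
  choose g hg1 hg2 using key
  -- the linear map and the matrix
  set T : (Fin n → ℝ) →ₗ[ℝ] (Fin n → ℝ) :=
    LinearMap.pi (fun i => LinearMap.proj i - g i) with hT
  have hTapp : ∀ x i, T x i = x i - g i x := fun x i => rfl
  refine ⟨LinearMap.toMatrix' T, ?_, ?_, ?_, ?_⟩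
  · -- rank
    have hmv : (LinearMap.toMatrix' T).mulVecLin = T := by
      rw [← Matrix.toLin'_apply']
      exact Matrix.toLin'_toMatrix' T
    have hker : A ≤ LinearMap.ker T := by
      intro a ha
      rw [LinearMap.mem_ker]
      funext i
      show a i - g i a = 0
      rw [show g i a = a i from hg1 i a ha, sub_self]
    have h1 : Matrix.rank (LinearMap.toMatrix' T) + Module.finrank ℝ (LinearMap.ker T) = n := by
      rw [Matrix.rank, hmv, LinearMap.finrank_range_add_finrank_ker, Module.finrank_fin_fun]
    have h2 : n - d ≤ Module.finrank ℝ (LinearMap.ker T) := hdim ▸ Submodule.finrank_mono hker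
    omega
  · -- diagonal
    intro i
    rw [LinearMap.toMatrix'_apply, hTapp]
    have hgi : g i (fun k => if k = i then (1:ℝ) else 0) = 0 := by
      have h := hg2 i (fun k => if k = i then (1:ℝ) else 0)
      have : ∑ j ∈ Finset.univ.erase i, |if j = i then (1:ℝ) else 0| = 0 := by
        apply Finset.sum_eq_zero
        intro j hj
        rw [if_neg (Finset.mem_erase.mp hj).1]
        simp
      rw [this, mul_zero] at h
      exact abs_eq_zero.mp (le_antisymm h (abs_nonneg _))
    rw [show (Pi.single i (1:ℝ) : Fin n → ℝ) = fun k => if k = i then (1:ℝ) else 0 from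
      funext fun k => by simp [Pi.single_apply]]
    simp [hgi]
  · -- off-diagonal bounds
    intro i j hij
    rw [LinearMap.toMatrix'_apply, hTapp]
    have hb := hg2 i (fun k => if k = j then (1:ℝ) else 0)
    have hsum : ∑ k ∈ Finset.univ.erase i, |if k = j then (1:ℝ) else 0| = 1 := by
      have heq : ∀ k, |if k = j then (1:ℝ) else 0| = if k = j then 1 else 0 := by
        intro k; split <;> simp
      simp_rw [heq]
      rw [Finset.sum_ite_eq']
      simp [Finset.mem_erase, hij.symm]
    rw [hsum, mul_one] at hb
    have habs : |(if i = j then (1:ℝ) else 0) - g i fun k => if k = j then 1 else 0|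
        = |g i fun k => if k = j then (1:ℝ) else 0| := by
      rw [if_neg hij, zero_sub, abs_neg]
    simp only [show (Pi.single j (1:ℝ) : Fin n → ℝ) = fun k => if k = j then (1:ℝ) else 0 from
      funext fun k => by simp [Pi.single_apply]]
    rw [habs]
    calc ENNReal.ofReal |g i fun k => if k = j then (1:ℝ) else 0|
        ≤ ENNReal.ofReal (α i) := ENNReal.ofReal_le_ofReal hb
      _ = AliSub i A := ENNReal.ofReal_toReal (hfin i)
  · -- kernel
    intro a ha
    have : (LinearMap.toMatrix' T).mulVec a = T a := by
      rw [← Matrix.toLin'_apply, Matrix.toLin'_toMatrix']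
    rw [this]
    funext i
    rw [hTapp, hg1 i a ha, sub_self]
    rfl
end

section
/- For all positive integers n, d with 1 ≤ d < n, off(n,d) ≤ Align(n, n−d). -/
open scoped ENNReal BigOperators
open Matrix

/-- For all positive integers `n, d` with `1 ≤ d < n`, `off(n, d) ≤ Align(n, n − d)`. -/
theorem off_le_Align (n d : ℕ) (hd : 1 ≤ d) (hdn : d < n) :
    ENNReal.ofReal (off n d) ≤ Align n (n - d) := by
  rw [Align]
  refine le_iInf fun A => le_iInf fun hA => ?_
  by_cases hfin : AlSub A = ⊤
  · simp [hfin]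
  set ε := (AlSub A).toReal with hεdef
  have hAe : AlSub A = ENNReal.ofReal ε := (ENNReal.ofReal_toReal hfin).symm
  have hε0 : 0 ≤ ε := ENNReal.toReal_nonneg
  -- key pointwise inequality
  have key : ∀ (i : Fin n), ∀ a ∈ A, |a i| ≤ ε * ∑ j ∈ Finset.univ.erase i, |a j| := by
    intro i a ha
    rcases eq_or_ne a 0 with rfl | hne
    · simp
    have h1 : Ali i a ≤ ENNReal.ofReal ε := by
      rw [← hAe]
      refine le_trans ?_ (le_iSup _ i)
      exact le_iSup₂_of_le a ha (le_iSup_of_le hne le_rfl)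
    set S := ∑ j ∈ Finset.univ.erase i, |a j| with hS
    have hS0 : 0 ≤ S := Finset.sum_nonneg fun j _ => abs_nonneg _
    rcases eq_or_lt_of_le hS0 with hS0' | hSpos
    · by_contra h
      push_neg at h
      have hai : (0:ℝ) < |a i| := lt_of_le_of_lt (by nlinarith) h
      have : Ali i a = ⊤ := by
        rw [Ali, ← hS, ← hS0', ENNReal.ofReal_zero]
        exact ENNReal.div_zero (ENNReal.ofReal_pos.mpr hai).ne'
      rw [this] at h1
      exact (ENNReal.ofReal_ne_top (top_le_iff.mp h1)).elim
    · have hSne : ENNReal.ofReal S ≠ 0 := by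
        simp [ENNReal.ofReal_eq_zero, not_le, hSpos]
      have h2 : ENNReal.ofReal |a i| ≤ ENNReal.ofReal ε * ENNReal.ofReal S := by
        rw [← ENNReal.div_le_iff hSne ENNReal.ofReal_ne_top]
        exact h1
      rw [← ENNReal.ofReal_mul hε0] at h2
      exact (ENNReal.ofReal_le_ofReal_iff (by positivity)).mp h2
  -- Hahn-Banach extension for each coordinate
  have HB : ∀ i : Fin n, ∃ g : (Fin n → ℝ) →ₗ[ℝ] ℝ,
      (∀ a ∈ A, g a = a i) ∧ ∀ x, |g x| ≤ ε * ∑ j ∈ Finset.univ.erase i, |x j| := by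
    intro i
    set N : (Fin n → ℝ) → ℝ := fun x => ε * ∑ j ∈ Finset.univ.erase i, |x j| with hN
    have Nneg : ∀ x, N (-x) = N x := by intro x; simp [hN]
    have Nhom : ∀ c : ℝ, 0 < c → ∀ x, N (c • x) = c * N x := by
      intro c hc x
      simp only [hN, Pi.smul_apply, smul_eq_mul, abs_mul, abs_of_pos hc, ← Finset.mul_sum]
      ring
    have Nadd : ∀ x y, N (x + y) ≤ N x + N y := by
      intro x y
      simp only [hN, Pi.add_apply, ← mul_add, ← Finset.sum_add_distrib]
      exact mul_le_mul_of_nonneg_left (Finset.sum_le_sum fun j _ => abs_add_le _ _) hε0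
    set f : (Fin n → ℝ) →ₗ.[ℝ] ℝ := ⟨A, (LinearMap.proj i).comp A.subtype⟩ with hf
    obtain ⟨g, hg1, hg2⟩ := exists_extension_of_le_sublinear f N Nhom Nadd
      (fun x => le_trans (le_abs_self _) (key i x x.2))
    refine ⟨g, fun a ha => hg1 ⟨a, ha⟩, fun x => abs_le.mpr ⟨?_, hg2 x⟩⟩
    have := hg2 (-x)
    rw [map_neg, Nneg] at this
    simp only [hN] at this
    linarith
  choose g hg1 hg2 using HB
  -- the matrix
  set B : Matrix (Fin n) (Fin n) ℝ :=
    fun i j => (if i = j then (1:ℝ) else 0) - g i (Pi.single j 1) with hB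
  have hgi0 : ∀ i, g i (Pi.single i 1) = 0 := by
    intro i
    have := hg2 i (Pi.single i 1)
    have hs : ∑ j ∈ Finset.univ.erase i, |Pi.single i (1:ℝ) j| = 0 := by
      apply Finset.sum_eq_zero
      intro j hj
      rw [Pi.single_apply, if_neg (Finset.ne_of_mem_erase hj), abs_zero]
    rw [hs, mul_zero] at this
    exact abs_eq_zero.mp (le_antisymm this (abs_nonneg _))
  have hdiag : ∀ i, B i i = 1 := by
    intro i; simp [hB, hgi0 i]
  have hoffd : ∀ i j, i ≠ j → |B i j| ≤ ε := by
    intro i j hij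
    have := hg2 i (Pi.single j 1)
    have hs : ∑ k ∈ Finset.univ.erase i, |Pi.single j (1:ℝ) k| = 1 := by
      rw [Finset.sum_eq_single j]
      · simp [Pi.single_apply]
      · intro k _ hk; rw [Pi.single_apply, if_neg hk, abs_zero]
      · intro hj; exact absurd (Finset.mem_erase.mpr ⟨hij.symm, Finset.mem_univ j⟩) hj
    rw [hs, mul_one] at this
    simpa [hB, if_neg hij] using this
  have hrow : ∀ a ∈ A, B.mulVec a = 0 := by
    intro a ha
    funext i
    have hrep : a = ∑ j : Fin n, a j • (Pi.single j 1 : Fin n → ℝ) := by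
      funext k
      simp [Pi.single_apply, Finset.sum_ite_eq', mul_comm]
    have hga : g i a = ∑ j : Fin n, a j * g i (Pi.single j 1) := by
      conv_lhs => rw [hrep]
      rw [map_sum]
      simp [smul_eq_mul]
    have h1 : ∑ j : Fin n, (if i = j then (1:ℝ) else 0) * a j = a i := by
      simp [Finset.sum_ite_eq]
    simp only [Matrix.mulVec, dotProduct, hB, Pi.zero_apply, sub_mul]
    rw [Finset.sum_sub_distrib, h1]
    have : ∑ j : Fin n, g i (Pi.single j 1) * a j = g i a := by
      rw [hga]; exact Finset.sum_congr rfl fun j _ => (mul_comm _ _)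
    rw [this, hg1 i a ha, sub_self]
  have hker : A ≤ LinearMap.ker B.mulVecLin := by
    intro a ha
    rw [LinearMap.mem_ker]
    show B.mulVec a = 0
    exact hrow a ha
  have hrank : B.rank ≤ d := by
    have h1 : B.rank + Module.finrank ℝ (LinearMap.ker B.mulVecLin) = n := by
      have := LinearMap.finrank_range_add_finrank_ker B.mulVecLin
      rw [Matrix.rank]
      simpa using this
    have h2 : n - d ≤ Module.finrank ℝ (LinearMap.ker B.mulVecLin) :=
      le_trans hA (Submodule.finrank_mono hker)
    omega
  -- conclude
  have hmem : ε ∈ {ε : ℝ | 0 ≤ ε ∧ ∃ B : Matrix (Fin n) (Fin n) ℝ,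
      B.rank ≤ d ∧ (∀ i, B i i = 1) ∧ ∀ i j, i ≠ j → |B i j| ≤ ε} :=
    ⟨hε0, B, hrank, hdiag, hoffd⟩
  have hoff : off n d ≤ ε := csInf_le ⟨0, fun x hx => hx.1⟩ hmem
  calc ENNReal.ofReal (off n d) ≤ ENNReal.ofReal ε := ENNReal.ofReal_le_ofReal hoff
    _ = AlSub A := hAe.symm
end

section
/- Let S = (s_1,…,s_n) be a list of n nonzero vectors in ℝ^d, and let A = {a ∈ ℝⁿ : Σ_{i=1}^n a_i s_i = 0} be the subspace of linear dependencies of S. Then for every i ∈ {1,…,n}, α_i(S) = Al_i(A). -/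
open scoped ENNReal BigOperators
open Matrix

/-- `α_i(S)` for a list `S` of vectors in `ℝ^d`: the largest `r` such that `r • S i` lies in
`H(S_i)`, the convex hull of `± S j` for `j ≠ i` (described by coefficients `lam` with
`lam i = 0` and `∑ j, |lam j| ≤ 1`). -/
noncomputable def alphaI {n d : ℕ} (S : Fin n → (Fin d → ℝ)) (i : Fin n) : ℝ :=
  sSup {r : ℝ | ∃ lam : Fin n → ℝ, lam i = 0 ∧ (∑ j, |lam j|) ≤ 1 ∧
    r • S i = ∑ j, lam j • S j}

/-- Let `S = (s_1, …, s_n)` be nonzero vectors in `ℝ^d` and let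
`A = {a ∈ ℝⁿ : ∑ i, a i • s i = 0}` be the subspace of linear dependencies of `S`.
Then `α_i(S) = Al_i(A)` for every `i`. -/
theorem alphaI_eq_AliSub (n d : ℕ) (S : Fin n → (Fin d → ℝ)) (hS : ∀ i, S i ≠ 0)
    (A : Submodule ℝ (Fin n → ℝ)) (hA : ∀ a : Fin n → ℝ, a ∈ A ↔ ∑ j, a j • S j = 0) :
    ∀ i : Fin n, ENNReal.ofReal (alphaI S i) = AliSub i A := by
  intro i
  set R : Set ℝ := {r : ℝ | ∃ lam : Fin n → ℝ, lam i = 0 ∧ (∑ j, |lam j|) ≤ 1 ∧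
    r • S i = ∑ j, lam j • S j} with hRdef
  have hSi : (0:ℝ) < ‖S i‖ := norm_pos_iff.mpr (hS i)
  have h0R : (0:ℝ) ∈ R := ⟨0, by simp⟩
  -- R is bounded above
  have hbdd : BddAbove R := by
    refine ⟨(∑ j, ‖S j‖) / ‖S i‖, ?_⟩
    rintro r ⟨lam, hlam0, hlam1, hr⟩
    rw [le_div_iff₀ hSi]
    have h1 : r * ‖S i‖ ≤ |r| * ‖S i‖ :=
      mul_le_mul_of_nonneg_right (le_abs_self r) hSi.le
    have h2 : ‖r • S i‖ = |r| * ‖S i‖ := by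
      rw [norm_smul, Real.norm_eq_abs]
    have h3 : ‖r • S i‖ ≤ ∑ j, |lam j| * ‖S j‖ := by
      rw [hr]
      refine (norm_sum_le _ _).trans (le_of_eq ?_)
      refine Finset.sum_congr rfl fun j _ => ?_
      rw [norm_smul, Real.norm_eq_abs]
    have h4 : ∑ j, |lam j| * ‖S j‖ ≤ ∑ j, ‖S j‖ := by
      refine Finset.sum_le_sum fun j _ => ?_
      have hj : |lam j| ≤ 1 := by
        refine le_trans ?_ hlam1
        exact Finset.single_le_sum (fun k _ => abs_nonneg (lam k)) (Finset.mem_univ j)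
      nlinarith [norm_nonneg (S j), abs_nonneg (lam j)]
    linarith
  have hne : R.Nonempty := ⟨0, h0R⟩
  -- each r ∈ R gives ofReal r ≤ AliSub i A
  have key1 : ∀ r ∈ R, ENNReal.ofReal r ≤ AliSub i A := by
    rintro r ⟨lam, hlam0, hlam1, hr⟩
    rcases le_or_gt r 0 with hr0 | hr0
    · rw [ENNReal.ofReal_eq_zero.mpr hr0]; exact zero_le
    · set a : Fin n → ℝ := fun j => if j = i then r else -lam j with ha
      have hai : a i = r := if_pos rfl
      have haj : ∀ j ∈ Finset.univ.erase i, a j = -lam j := by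
        intro j hj
        simp [ha, Finset.ne_of_mem_erase hj]
      have haA : a ∈ A := by
        rw [hA]
        have e1 := Finset.add_sum_erase Finset.univ (fun j => a j • S j) (Finset.mem_univ i)
        have e2 := Finset.add_sum_erase Finset.univ (fun j => lam j • S j) (Finset.mem_univ i)
        have e3 : ∑ j ∈ Finset.univ.erase i, a j • S j
            = -∑ j ∈ Finset.univ.erase i, lam j • S j := by
          rw [← Finset.sum_neg_distrib]
          refine Finset.sum_congr rfl fun j hj => ?_
          rw [haj j hj, neg_smul]
        rw [← e1, e3, hai, hr, ← e2, hlam0, zero_smul, zero_add, add_neg_cancel]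
      have hane : a ≠ 0 := by
        intro h
        have := congrFun h i
        rw [hai] at this
        exact absurd this (ne_of_gt hr0)
      have hAli : ENNReal.ofReal r ≤ Ali i a := by
        have hai' : |a i| = r := by rw [hai, abs_of_pos hr0]
        have hsum : ∑ j ∈ Finset.univ.erase i, |a j| ≤ 1 := by
          have heq : ∀ j ∈ Finset.univ.erase i, |a j| = |lam j| := by
            intro j hj
            rw [haj j hj, abs_neg]
          rw [Finset.sum_congr rfl heq]
          exact le_trans (Finset.sum_le_sum_of_subset_of_nonneg
            (Finset.erase_subset i Finset.univ) (fun k _ _ => abs_nonneg _)) hlam1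
        rw [Ali, hai']
        calc ENNReal.ofReal r = ENNReal.ofReal r / 1 := by simp
          _ ≤ ENNReal.ofReal r / ENNReal.ofReal (∑ j ∈ Finset.univ.erase i, |a j|) :=
            ENNReal.div_le_div_left (ENNReal.ofReal_le_one.mpr hsum) _
      refine hAli.trans ?_
      rw [AliSub]
      exact le_iSup_of_le a (le_iSup_of_le haA (le_iSup_of_le hane le_rfl))
  refine le_antisymm ?_ ?_
  · -- ofReal (sSup R) ≤ AliSub
    have hmap : ENNReal.ofReal (sSup R) = sSup (ENNReal.ofReal '' R) :=
      Monotone.map_csSup_of_continuousAt (ENNReal.continuous_ofReal.continuousAt)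
        (fun x y h => ENNReal.ofReal_le_ofReal h) hne hbdd
    rw [alphaI, ← hRdef, hmap]
    refine sSup_le ?_
    rintro _ ⟨r, hrR, rfl⟩
    exact key1 r hrR
  · -- AliSub ≤ ofReal (sSup R)
    rw [AliSub]
    refine iSup_le fun a => iSup_le fun haA => iSup_le fun hane => ?_
    by_cases hai : a i = 0
    · simp [Ali, hai]
    · set D : ℝ := ∑ j ∈ Finset.univ.erase i, |a j| with hD
      have hDnn : 0 ≤ D := Finset.sum_nonneg fun j _ => abs_nonneg _
      have hsumA : ∑ j, a j • S j = 0 := (hA a).mp haA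
      have hsplit : a i • S i + ∑ j ∈ Finset.univ.erase i, a j • S j = 0 := by
        have e1 := Finset.add_sum_erase Finset.univ (fun j => a j • S j) (Finset.mem_univ i)
        rw [e1, hsumA]
      have hDpos : 0 < D := by
        rcases hDnn.lt_or_eq with h | h
        · exact h
        · exfalso
          have hz : ∀ j ∈ Finset.univ.erase i, |a j| = 0 :=
            (Finset.sum_eq_zero_iff_of_nonneg (fun k _ => abs_nonneg (a k))).mp h.symm
          have hz2 : ∑ j ∈ Finset.univ.erase i, a j • S j = 0 := by
            refine Finset.sum_eq_zero fun j hj => ?_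
            rw [abs_eq_zero.mp (hz j hj), zero_smul]
          rw [hz2, add_zero] at hsplit
          rcases smul_eq_zero.mp hsplit with h' | h'
          · exact hai h'
          · exact hS i h'
      set r : ℝ := |a i| / D with hr
      have hc : |(|a i| / (a i * D))| = 1 / D := by
        rw [abs_div, abs_abs, abs_mul, abs_of_pos hDpos, div_mul_eq_div_div,
          div_self (abs_ne_zero.mpr hai)]
      have hrR : r ∈ R := by
        refine ⟨fun j => if j = i then 0 else -(|a i| / (a i * D)) * a j, by simp, ?_, ?_⟩
        · have e1 := Finset.add_sum_erase Finset.univ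
            (fun j => |if j = i then 0 else -(|a i| / (a i * D)) * a j|) (Finset.mem_univ i)
          simp only [eq_self_iff_true, if_true, abs_zero, zero_add] at e1
          rw [← e1]
          have heq : ∀ j ∈ Finset.univ.erase i,
              |if j = i then 0 else -(|a i| / (a i * D)) * a j| = (1 / D) * |a j| := by
            intro j hj
            rw [if_neg (Finset.ne_of_mem_erase hj), abs_mul, abs_neg, hc]
          rw [Finset.sum_congr rfl heq, ← Finset.mul_sum, ← hD, one_div,
            inv_mul_cancel₀ (ne_of_gt hDpos)]
        · have e1 := Finset.add_sum_erase Finset.univ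
            (fun j => (if j = i then 0 else -(|a i| / (a i * D)) * a j) • S j)
            (Finset.mem_univ i)
          simp only [eq_self_iff_true, if_true, zero_smul, zero_add] at e1
          rw [← e1]
          have heq : ∀ j ∈ Finset.univ.erase i,
              (if j = i then 0 else -(|a i| / (a i * D)) * a j) • S j
                = (-(|a i| / (a i * D))) • (a j • S j) := by
            intro j hj
            rw [if_neg (Finset.ne_of_mem_erase hj), mul_smul]
          rw [Finset.sum_congr rfl heq, ← Finset.smul_sum]
          have hsum2 : ∑ j ∈ Finset.univ.erase i, a j • S j = -(a i • S i) :=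
            eq_neg_of_add_eq_zero_right hsplit
          rw [hsum2, smul_neg, neg_smul, neg_neg, smul_smul]
          congr 1
          rw [hr]
          field_simp [ne_of_gt hDpos]
      have hval : Ali i a = ENNReal.ofReal r := by
        rw [Ali, ← hD, hr, ENNReal.ofReal_div_of_pos hDpos]
      rw [hval]
      exact ENNReal.ofReal_le_ofReal (le_csSup hbdd hrR)
end

section
/- For all positive integers n, d, off(n,d) equals the minimum, over all lists S of n nonzero vectors in ℝ^d, of max_{1 ≤ i ≤ n} α_i(S). -/
open Matrix

lemma sum_castLE_ite {r d : ℕ} (h : r ≤ d) (b : Fin d) (f : Fin r → ℝ) :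
    (∑ a, if Fin.castLE h a = b then f a else 0)
      = if hb : (b : ℕ) < r then f ⟨b, hb⟩ else 0 := by
  split_ifs with hb
  · rw [Finset.sum_eq_single ⟨(b : ℕ), hb⟩]
    · rw [if_pos]; exact Fin.ext rfl
    · intro a _ ha
      rw [if_neg]
      intro hab
      exact ha (by apply Fin.ext; simpa using congrArg Fin.val hab)
    · simp
  · apply Finset.sum_eq_zero
    intro a _
    rw [if_neg]
    intro hab
    exact hb (hab ▸ a.2)

lemma euclid_abs_apply_le {n : ℕ} (x : EuclideanSpace ℝ (Fin n)) (j : Fin n) : |x j| ≤ ‖x‖ := by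
  rw [EuclideanSpace.norm_eq]
  calc |x j| = Real.sqrt (‖x j‖ ^ 2) := by
        rw [Real.sqrt_sq_eq_abs]; simp
    _ ≤ _ := by
        apply Real.sqrt_le_sqrt
        exact Finset.single_le_sum (f := fun i => ‖x i‖ ^ 2)
          (fun i _ => by positivity) (Finset.mem_univ j)

lemma exists_bdd_factorization {n d : ℕ} (B : Matrix (Fin n) (Fin n) ℝ) (hB : B.rank ≤ d)
    {c : ℝ} (hc0 : 0 ≤ c) (hc : ∀ i j, |B i j| ≤ c) :
    ∃ (L : Matrix (Fin n) (Fin d) ℝ) (R : Matrix (Fin d) (Fin n) ℝ),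
      B = L * R ∧ (∀ i k, |L i k| ≤ (n : ℝ) * c) ∧ (∀ k j, |R k j| ≤ 1) := by
  classical
  have hnc : (0:ℝ) ≤ (n : ℝ) * c := mul_nonneg (Nat.cast_nonneg n) hc0
  set ℓ : (Fin n → ℝ) ≃ₗ[ℝ] EuclideanSpace ℝ (Fin n) :=
    (WithLp.linearEquiv 2 ℝ (Fin n → ℝ)).symm with hℓ
  set V0 : Submodule ℝ (Fin n → ℝ) := Submodule.span ℝ (Set.range B) with hV0
  set V : Submodule ℝ (EuclideanSpace ℝ (Fin n)) := V0.map (ℓ : _ →ₗ[ℝ] _) with hV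
  have hfr : Module.finrank ℝ V = B.rank := by
    rw [hV, LinearEquiv.finrank_map_eq, B.rank_eq_finrank_span_row]; rfl
  have hrd : Module.finrank ℝ V ≤ d := hfr ▸ hB
  set r := Module.finrank ℝ V with hr
  let ob : OrthonormalBasis (Fin r) ℝ V := stdOrthonormalBasis ℝ V
  have hmem : ∀ i, ℓ (B i) ∈ V := by
    intro i
    exact Submodule.mem_map_of_mem (Submodule.subset_span (Set.mem_range_self i))
  let u : Fin n → V := fun i => ⟨ℓ (B i), hmem i⟩
  let L' : Matrix (Fin n) (Fin r) ℝ := fun i k => ob.repr (u i) k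
  let R' : Matrix (Fin r) (Fin n) ℝ := fun k j => ℓ.symm ((ob k : EuclideanSpace ℝ (Fin n))) j
  have hfact : B = L' * R' := by
    ext i j
    have h1 : (u i : EuclideanSpace ℝ (Fin n))
        = ∑ k, ob.repr (u i) k • ((ob k : EuclideanSpace ℝ (Fin n))) := by
      conv_lhs => rw [← ob.sum_repr (u i)]
      push_cast
      simp
    have h2 : B i = ∑ k, ob.repr (u i) k • ℓ.symm ((ob k : EuclideanSpace ℝ (Fin n))) := by
      have : B i = ℓ.symm (u i : EuclideanSpace ℝ (Fin n)) := by simp [u]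
      rw [this, h1, map_sum]
      simp
    calc B i j = (∑ k, ob.repr (u i) k • ℓ.symm ((ob k : EuclideanSpace ℝ (Fin n)))) j := by
          rw [← h2]
      _ = ∑ k, ob.repr (u i) k * ℓ.symm ((ob k : EuclideanSpace ℝ (Fin n))) j := by
          simp [Finset.sum_apply]
      _ = (L' * R') i j := by rw [Matrix.mul_apply]
  have hnormB : ∀ i, ‖(u i : EuclideanSpace ℝ (Fin n))‖ ≤ (n : ℝ) * c := by
    intro i
    have happ : ∀ j, (u i : EuclideanSpace ℝ (Fin n)) j = B i j := fun j => rfl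
    rw [EuclideanSpace.norm_eq]
    have h1 : ∑ j, ‖(u i : EuclideanSpace ℝ (Fin n)) j‖ ^ 2 ≤ ((n:ℝ) * c) ^ 2 := by
      calc ∑ j, ‖(u i : EuclideanSpace ℝ (Fin n)) j‖ ^ 2
          ≤ ∑ _j : Fin n, c ^ 2 := by
            apply Finset.sum_le_sum
            intro j _
            rw [happ j]
            calc ‖B i j‖ ^ 2 = |B i j| ^ 2 := by simp
              _ ≤ c ^ 2 := pow_le_pow_left₀ (abs_nonneg _) (hc i j) 2
        _ = (n : ℝ) * c ^ 2 := by simp [mul_comm]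
        _ ≤ ((n:ℝ) * c) ^ 2 := by
            rw [mul_pow]
            exact mul_le_mul_of_nonneg_right
              (by exact_mod_cast Nat.le_self_pow two_ne_zero n) (sq_nonneg c)
    calc Real.sqrt (∑ j, ‖(u i : EuclideanSpace ℝ (Fin n)) j‖ ^ 2)
        ≤ Real.sqrt (((n:ℝ) * c) ^ 2) := Real.sqrt_le_sqrt h1
      _ = (n:ℝ) * c := Real.sqrt_sq hnc
  have hL' : ∀ i k, |L' i k| ≤ (n : ℝ) * c := by
    intro i k
    have h1 : L' i k = inner (𝕜 := ℝ) (ob k) (u i) := ob.repr_apply_apply (u i) k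
    calc |L' i k| ≤ ‖ob k‖ * ‖u i‖ := h1 ▸ abs_real_inner_le_norm _ _
      _ = ‖(u i : EuclideanSpace ℝ (Fin n))‖ := by
          rw [ob.orthonormal.1 k, one_mul]; rfl
      _ ≤ (n : ℝ) * c := hnormB i
  have hR' : ∀ k j, |R' k j| ≤ 1 := by
    intro k j
    have h1 : |R' k j| = |(ob k : EuclideanSpace ℝ (Fin n)) j| := rfl
    rw [h1]
    calc |(ob k : EuclideanSpace ℝ (Fin n)) j| ≤ ‖(ob k : EuclideanSpace ℝ (Fin n))‖ :=
          euclid_abs_apply_le _ j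
      _ = 1 := by rw [show ‖(ob k : EuclideanSpace ℝ (Fin n))‖ = ‖ob k‖ from rfl,
          ob.orthonormal.1 k]
  -- padding
  let J : Matrix (Fin r) (Fin d) ℝ := fun a b => if Fin.castLE hrd a = b then 1 else 0
  have hJJ : J * Jᵀ = (1 : Matrix (Fin r) (Fin r) ℝ) := by
    ext a b
    simp only [Matrix.mul_apply, transpose_apply]
    simp only [J, ite_mul, one_mul, zero_mul]
    rw [Finset.sum_ite_eq Finset.univ (Fin.castLE hrd a)
      (fun cc => if Fin.castLE hrd b = cc then (1:ℝ) else 0)]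
    simp only [Finset.mem_univ, if_true]
    by_cases hab : a = b
    · subst hab; simp [Matrix.one_apply]
    · rw [if_neg (fun h => hab (Fin.castLE_inj.mp h).symm), Matrix.one_apply_ne hab]
  refine ⟨L' * J, Jᵀ * R', ?_, ?_, ?_⟩
  · rw [hfact, Matrix.mul_assoc, ← Matrix.mul_assoc J, hJJ, Matrix.one_mul]
  · intro i b
    have h1 : (L' * J) i b = ∑ a, if Fin.castLE hrd a = b then L' i a else 0 := by
      rw [Matrix.mul_apply]; simp [J, mul_ite, mul_one, mul_zero]
    rw [h1, sum_castLE_ite]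
    split_ifs with hb
    · exact hL' i _
    · simpa using hnc
  · intro b j
    have h1 : (Jᵀ * R') b j = ∑ a, if Fin.castLE hrd a = b then R' a j else 0 := by
      rw [Matrix.mul_apply]; simp only [transpose_apply]; simp [J, ite_mul, one_mul, zero_mul]
    rw [h1, sum_castLE_ite]
    split_ifs with hb
    · exact hR' _ j
    · simp


section alpha
variable {n d : ℕ} (S : Fin n → (Fin d → ℝ))

def RSet (i : Fin n) : Set ℝ := {r : ℝ | ∃ lam : Fin n → ℝ, lam i = 0 ∧ (∑ j, |lam j|) ≤ 1 ∧
    r • S i = ∑ j, lam j • S j}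

end alpha

def LamSet {n : ℕ} (i : Fin n) : Set (Fin n → ℝ) := {lam | lam i = 0 ∧ (∑ j, |lam j|) ≤ 1}

lemma lam_abs_le_one {n : ℕ} {i : Fin n} {lam : Fin n → ℝ} (h : lam ∈ LamSet i) (j : Fin n) :
    |lam j| ≤ 1 :=
  le_trans (Finset.single_le_sum (f := fun j => |lam j|) (fun _ _ => abs_nonneg _)
    (Finset.mem_univ j)) h.2

section alpha
variable {n d : ℕ} (S : Fin n → (Fin d → ℝ))

def KSet (i : Fin n) : Set (Fin d → ℝ) := (fun lam => ∑ j, lam j • S j) '' LamSet i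

lemma isCompact_KSet (i : Fin n) : IsCompact (KSet S i) := by
  apply IsCompact.image
  · apply IsCompact.of_isClosed_subset
      (isCompact_univ_pi fun _ : Fin n => isCompact_Icc (a := (-1:ℝ)) (b := 1))
    · exact IsClosed.inter (isClosed_eq (continuous_apply i) continuous_const)
        (isClosed_le (continuous_finset_sum _ fun j _ =>
          (continuous_apply j).abs) continuous_const)
    · intro lam hlam
      rw [Set.mem_univ_pi]
      intro j
      exact abs_le.mp (lam_abs_le_one hlam j)
  · exact continuous_finset_sum _ fun j _ => ((continuous_apply j).smul continuous_const)

lemma convex_KSet (i : Fin n) : Convex ℝ (KSet S i) := by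
  apply Convex.is_linear_image
  · intro lam hlam mu hmu a b ha hb hab
    refine ⟨by simp [hlam.1, hmu.1], ?_⟩
    calc ∑ j, |(a • lam + b • mu) j| ≤ ∑ j, (a * |lam j| + b * |mu j|) := by
          apply Finset.sum_le_sum
          intro j _
          calc |(a • lam + b • mu) j| = |a * lam j + b * mu j| := rfl
            _ ≤ |a * lam j| + |b * mu j| := abs_add_le _ _
            _ = a * |lam j| + b * |mu j| := by
                rw [abs_mul, abs_mul, abs_of_nonneg ha, abs_of_nonneg hb]
      _ = a * (∑ j, |lam j|) + b * (∑ j, |mu j|) := by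
          rw [Finset.sum_add_distrib, Finset.mul_sum, Finset.mul_sum]
      _ ≤ a * 1 + b * 1 := by
          apply add_le_add
          · exact mul_le_mul_of_nonneg_left hlam.2 ha
          · exact mul_le_mul_of_nonneg_left hmu.2 hb
      _ = 1 := by rw [mul_one, mul_one, hab]
  · constructor
    · intro x y
      simp [add_smul, Finset.sum_add_distrib]
    · intro c x
      simp [smul_smul, Finset.smul_sum]

lemma zero_mem_KSet (i : Fin n) : (0 : Fin d → ℝ) ∈ KSet S i :=
  ⟨0, ⟨rfl, by simp⟩, by simp⟩

lemma RSet_eq (i : Fin n) : RSet S i = (fun r => r • S i) ⁻¹' (KSet S i) := by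
  ext r
  constructor
  · rintro ⟨lam, h1, h2, h3⟩
    exact ⟨lam, ⟨h1, h2⟩, h3.symm⟩
  · rintro ⟨lam, ⟨h1, h2⟩, h3⟩
    exact ⟨lam, h1, h2, h3.symm⟩

lemma zero_mem_RSet (i : Fin n) : (0:ℝ) ∈ RSet S i := by
  rw [RSet_eq]
  simpa using zero_mem_KSet S i

lemma bddAbove_RSet (hS : ∀ i, S i ≠ 0) (i : Fin n) : BddAbove (RSet S i) := by
  have : ∃ j₀, S i j₀ ≠ 0 := by
    by_contra h
    push_neg at h
    exact hS i (funext h)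
  obtain ⟨j₀, hj₀⟩ := this
  refine ⟨(∑ j, |S j j₀|) / |S i j₀|, ?_⟩
  rintro r ⟨lam, h1, h2, h3⟩
  have h4 : r * S i j₀ = ∑ j, lam j * S j j₀ := by
    have := congrFun h3 j₀
    simpa [Finset.sum_apply] using this
  have h5 : |r| * |S i j₀| ≤ ∑ j, |S j j₀| := by
    rw [← abs_mul, h4]
    calc |∑ j, lam j * S j j₀| ≤ ∑ j, |lam j * S j j₀| := Finset.abs_sum_le_sum_abs _ _
      _ ≤ ∑ j, |S j j₀| := by
          apply Finset.sum_le_sum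
          intro j _
          rw [abs_mul]
          exact mul_le_of_le_one_left (abs_nonneg _) (lam_abs_le_one ⟨h1, h2⟩ j)
  calc r ≤ |r| := le_abs_self r
    _ ≤ (∑ j, |S j j₀|) / |S i j₀| := by
        rw [le_div_iff₀ (abs_pos.mpr hj₀)]
        exact h5

lemma isClosed_RSet (i : Fin n) : IsClosed (RSet S i) := by
  rw [RSet_eq]
  exact ((isCompact_KSet S i).isClosed).preimage (continuous_id.smul continuous_const)

lemma alphaI_mem (hS : ∀ i, S i ≠ 0) (i : Fin n) : alphaI S i ∈ RSet S i :=
  (isClosed_RSet S i).csSup_mem ⟨0, zero_mem_RSet S i⟩ (bddAbove_RSet S hS i)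

lemma alphaI_nonneg (hS : ∀ i, S i ≠ 0) (i : Fin n) : 0 ≤ alphaI S i :=
  le_csSup (bddAbove_RSet S hS i) (zero_mem_RSet S i)

lemma mem_RSet_le_alphaI (hS : ∀ i, S i ≠ 0) {i : Fin n} {r : ℝ} (hr : r ∈ RSet S i) :
    r ≤ alphaI S i :=
  le_csSup (bddAbove_RSet S hS i) hr

end alpha


def OffSet (n d : ℕ) : Set ℝ := {ε : ℝ | 0 ≤ ε ∧ ∃ B : Matrix (Fin n) (Fin n) ℝ,
    B.rank ≤ d ∧ (∀ i, B i i = 1) ∧ ∀ i j, i ≠ j → |B i j| ≤ ε}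

lemma off_eq (n d : ℕ) : off n d = sInf (OffSet n d) := rfl

lemma offSet_bddBelow (n d : ℕ) : BddBelow (OffSet n d) := ⟨0, fun _ hx => hx.1⟩

lemma off_le_of_S {n d : ℕ} (hn : 0 < n) (S : Fin n → Fin d → ℝ) (hS : ∀ i, S i ≠ 0) :
    off n d ≤ ⨆ i, alphaI S i := by
  classical
  set m := ⨆ i, alphaI S i with hm
  have hbdd : BddAbove (Set.range fun i => alphaI S i) := Set.Finite.bddAbove (Set.finite_range _)
  have hle : ∀ i, alphaI S i ≤ m := fun i => le_ciSup hbdd i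
  have hm0 : 0 ≤ m := le_trans (alphaI_nonneg S hS ⟨0, hn⟩) (hle _)
  apply le_of_forall_pos_le_add
  intro ε hε
  set β := m + ε with hβ
  have hβpos : 0 < β := by positivity
  have hsep : ∀ i, ∃ f : (Fin d → ℝ) →L[ℝ] ℝ,
      0 < f (S i) ∧ ∀ j, j ≠ i → |f (S j)| < β * f (S i) := by
    intro i
    have hnotin : β • S i ∉ KSet S i := by
      intro hmem
      have h1 : β ∈ RSet S i := by rw [RSet_eq]; exact hmem
      have h2 := mem_RSet_le_alphaI S hS h1
      have h3 := hle i
      have : β ≤ m := le_trans h2 h3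
      linarith
    obtain ⟨f, u, hfu, huβ⟩ := geometric_hahn_banach_closed_point
      (convex_KSet S i) ((isCompact_KSet S i).isClosed) hnotin
    have hfβ : f (β • S i) = β * f (S i) := by rw [_root_.map_smul]; rfl
    rw [hfβ] at huβ
    have hαK : (alphaI S i) • S i ∈ KSet S i := by
      have h := alphaI_mem S hS i; rw [RSet_eq] at h; exact h
    have h1 : alphaI S i * f (S i) < u := by
      have h := hfu _ hαK
      rwa [_root_.map_smul, smul_eq_mul] at h
    have hfSi : 0 < f (S i) := by nlinarith [hle i, hε]
    refine ⟨f, hfSi, ?_⟩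
    intro j hj
    have hmem1 : S j ∈ KSet S i := by
      refine ⟨fun k => if k = j then 1 else 0, ⟨by simp [Ne.symm hj], ?_⟩, ?_⟩
      · simp [apply_ite abs]
      · simp [ite_smul]
    have hmem2 : -S j ∈ KSet S i := by
      refine ⟨fun k => if k = j then -1 else 0, ⟨by simp [Ne.symm hj], ?_⟩, ?_⟩
      · simp [apply_ite abs]
      · simp [ite_smul]
    have hj1 : f (S j) < u := hfu _ hmem1
    have hj2 : -(f (S j)) < u := by have := hfu _ hmem2; rwa [map_neg] at this
    have : |f (S j)| < u := abs_lt.mpr ⟨by linarith, hj1⟩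
    linarith
  choose f hf1 hf2 using hsep
  let L : Matrix (Fin n) (Fin d) ℝ := fun i k => f i (fun l => if k = l then 1 else 0) / f i (S i)
  let R : Matrix (Fin d) (Fin n) ℝ := fun k j => S j k
  have hBij : ∀ i j, (L * R) i j = f i (S j) / f i (S i) := by
    intro i j
    have hexp : f i (S j) = ∑ k, S j k • (f i) (fun l => if k = l then 1 else 0) := by
      have := LinearMap.pi_apply_eq_sum_univ ((f i) : (Fin d → ℝ) →ₗ[ℝ] ℝ) (S j)
      simpa using this
    calc (L * R) i j = ∑ k, (f i (fun l => if k = l then 1 else 0) / f i (S i)) * S j k := by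
          rw [Matrix.mul_apply]
      _ = (∑ k, S j k * f i (fun l => if k = l then 1 else 0)) / f i (S i) := by
          rw [Finset.sum_div]
          apply Finset.sum_congr rfl
          intro k _
          rw [div_mul_eq_mul_div, mul_comm]
      _ = f i (S j) / f i (S i) := by
          rw [hexp]
          simp [smul_eq_mul]
  have hrank : (L * R).rank ≤ d :=
    le_trans (Matrix.rank_mul_le_left L R) (by simpa using Matrix.rank_le_card_width L)
  have hdiag : ∀ i, (L * R) i i = 1 := fun i => by
    rw [hBij]; exact div_self (ne_of_gt (hf1 i))
  have hoffd : ∀ i j, i ≠ j → |(L * R) i j| ≤ β := by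
    intro i j hij
    rw [hBij, abs_div, abs_of_pos (hf1 i), div_le_iff₀ (hf1 i)]
    exact (hf2 i j (Ne.symm hij)).le
  exact csInf_le (offSet_bddBelow n d) ⟨hβpos.le, L * R, hrank, hdiag, hoffd⟩

lemma one_mem_offSet (n d : ℕ) (hd : 0 < d) : (1:ℝ) ∈ OffSet n d := by
  classical
  let k0 : Fin d := ⟨0, hd⟩
  let L : Matrix (Fin n) (Fin d) ℝ := fun _ k => if k = k0 then 1 else 0
  let R : Matrix (Fin d) (Fin n) ℝ := fun k _ => if k = k0 then 1 else 0
  have hent : ∀ i j, (L * R) i j = 1 := by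
    intro i j
    rw [Matrix.mul_apply]; simp [L, R, ite_mul, one_mul, Finset.sum_ite_eq']
  refine ⟨zero_le_one, L * R, ?_, fun i => hent i i, fun i j _ => by rw [hent]; simp⟩
  exact le_trans (Matrix.rank_mul_le_left L R) (by simpa using Matrix.rank_le_card_width L)

lemma off_nonneg (n d : ℕ) (hd : 0 < d) : 0 ≤ off n d :=
  le_csInf ⟨1, one_mem_offSet n d hd⟩ fun _ hx => hx.1

lemma exists_off_opt (n d : ℕ) (hd : 0 < d) :
    ∃ B : Matrix (Fin n) (Fin n) ℝ, B.rank ≤ d ∧ (∀ i, B i i = 1) ∧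
      ∀ i j, i ≠ j → |B i j| ≤ off n d := by
  classical
  have hne : (OffSet n d).Nonempty := ⟨1, one_mem_offSet n d hd⟩
  have h0 : 0 ≤ off n d := off_nonneg n d hd
  have hseq : ∀ k : ℕ, ∃ B : Matrix (Fin n) (Fin n) ℝ, B.rank ≤ d ∧ (∀ i, B i i = 1) ∧
      ∀ i j, i ≠ j → |B i j| ≤ off n d + 1/(k+1) := by
    intro k
    have hlt : sInf (OffSet n d) < off n d + 1/(k+1) := by
      rw [← off_eq]
      have : (0:ℝ) < 1/((k:ℝ)+1) := by positivity
      linarith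
    obtain ⟨ε', hε', hlt'⟩ := (csInf_lt_iff (offSet_bddBelow n d) hne).mp hlt
    obtain ⟨B, h1, h2, h3⟩ := hε'.2
    exact ⟨B, h1, h2, fun i j hij => (h3 i j hij).trans hlt'.le⟩
  choose Bs hrank hdiag hoff using hseq
  set c : ℝ := max 1 (off n d + 1) with hc
  have hc0 : 0 ≤ c := le_trans zero_le_one (le_max_left _ _)
  have hentry : ∀ k i j, |Bs k i j| ≤ c := by
    intro k i j
    by_cases hij : i = j
    · subst hij; rw [hdiag k i]
      rw [hc, abs_one]
      exact le_max_left 1 (off n d + 1)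
    · refine (hoff k i j hij).trans (le_trans ?_ (le_max_right _ _))
      have h1 : 1/((k:ℝ)+1) ≤ 1 := by
        rw [div_le_one (by positivity)]
        linarith [Nat.cast_nonneg (α := ℝ) k]
      linarith
  choose Ls Rs hfac hLb hRb using fun k =>
    exists_bdd_factorization (Bs k) (hrank k) hc0 (hentry k)
  set X := (Fin n → Fin d → ℝ) × (Fin d → Fin n → ℝ) with hX
  set s : Set X := (Set.pi Set.univ fun _ : Fin n => Set.pi Set.univ fun _ : Fin d =>
      Set.Icc (-((n:ℝ)*c)) ((n:ℝ)*c)) ×ˢ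
    (Set.pi Set.univ fun _ : Fin d => Set.pi Set.univ fun _ : Fin n =>
      Set.Icc (-(1:ℝ)) 1) with hs
  have hscomp : IsCompact s := IsCompact.prod
    (isCompact_univ_pi fun _ => isCompact_univ_pi fun _ => isCompact_Icc)
    (isCompact_univ_pi fun _ => isCompact_univ_pi fun _ => isCompact_Icc)
  have hmem : ∀ k, ((Ls k, Rs k) : X) ∈ s := by
    intro k
    constructor
    · rw [Set.mem_univ_pi]
      intro i
      rw [Set.mem_univ_pi]
      intro kk
      exact abs_le.mp (hLb k i kk)
    · rw [Set.mem_univ_pi]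
      intro kk
      rw [Set.mem_univ_pi]
      intro j
      exact abs_le.mp (hRb k kk j)
  obtain ⟨p, _hp, φ, hφ, hlim⟩ := hscomp.tendsto_subseq hmem
  set Bopt : Matrix (Fin n) (Fin n) ℝ := Matrix.of p.1 * Matrix.of p.2 with hBopt
  have hentrylim : ∀ i j, Filter.Tendsto (fun mm => Bs (φ mm) i j)
      Filter.atTop (nhds (Bopt i j)) := by
    intro i j
    have hcont : Continuous (fun q : X => ∑ k, q.1 i k * q.2 k j) := by
      apply continuous_finset_sum
      intro k _
      show Continuous (fun q : (Fin n → Fin d → ℝ) × (Fin d → Fin n → ℝ) => q.1 i k * q.2 k j)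
      fun_prop
    have h1 := (hcont.tendsto p).comp hlim
    have h2 : ((fun q : X => ∑ k, q.1 i k * q.2 k j) ∘ ((fun k => ((Ls k, Rs k) : X)) ∘ φ))
        = fun mm => Bs (φ mm) i j := by
      funext mm
      show ∑ k, (Ls (φ mm)) i k * (Rs (φ mm)) k j = Bs (φ mm) i j
      rw [hfac (φ mm), Matrix.mul_apply]
    rwa [h2] at h1
  refine ⟨Bopt, ?_, ?_, ?_⟩
  · exact le_trans (Matrix.rank_mul_le_left _ _)
      (by simpa using Matrix.rank_le_card_width (Matrix.of p.1))
  · intro i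
    have h1 := hentrylim i i
    have h2 : Filter.Tendsto (fun mm => Bs (φ mm) i i) Filter.atTop (nhds 1) := by
      simp only [hdiag]
      exact tendsto_const_nhds
    exact tendsto_nhds_unique h1 h2
  · intro i j hij
    have h1 : Filter.Tendsto (fun mm => |Bs (φ mm) i j|) Filter.atTop (nhds |Bopt i j|) :=
      (continuous_abs.tendsto _).comp (hentrylim i j)
    have h2 : Filter.Tendsto (fun mm : ℕ => off n d + 1/((mm:ℝ)+1))
        Filter.atTop (nhds (off n d)) := by
      have h3 := tendsto_one_div_add_atTop_nhds_zero_nat (𝕜 := ℝ)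
      simpa using tendsto_const_nhds.add h3
    apply le_of_tendsto_of_tendsto' h1 h2
    intro mm
    calc |Bs (φ mm) i j| ≤ off n d + 1/((φ mm : ℝ)+1) := hoff (φ mm) i j hij
      _ ≤ off n d + 1/((mm:ℝ)+1) := by
          have hmono : (mm:ℝ) + 1 ≤ (φ mm : ℝ) + 1 := by
            have h4 : mm ≤ φ mm := hφ.le_apply
            have : (mm:ℝ) ≤ (φ mm : ℝ) := by exact_mod_cast h4
            linarith
          have h5 : 1/((φ mm:ℝ)+1) ≤ 1/((mm:ℝ)+1) :=
            one_div_le_one_div_of_le (by positivity) hmono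
          linarith

/-- For all positive integers `n, d`, `off(n, d)` is the minimum, over all lists `S` of `n`
nonzero vectors in `ℝ^d`, of `max_{1 ≤ i ≤ n} α_i(S)`. -/
theorem off_eq_min_max_alphaI (n d : ℕ) (hn : 0 < n) (hd : 0 < d) :
    IsLeast {ε : ℝ | ∃ S : Fin n → (Fin d → ℝ),
      (∀ i, S i ≠ 0) ∧ ε = ⨆ i : Fin n, alphaI S i} (off n d) := by
  constructor
  · obtain ⟨B, hrank, hdiag, hoff⟩ := exists_off_opt n d hd
    have h0 := off_nonneg n d hd
    set c : ℝ := max 1 (off n d) with hc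
    have hc0 : 0 ≤ c := le_trans zero_le_one (le_max_left _ _)
    have hentry : ∀ i j, |B i j| ≤ c := by
      intro i j
      by_cases hij : i = j
      · subst hij; rw [hdiag i, abs_one, hc]; exact le_max_left _ _
      · exact (hoff i j hij).trans (le_max_right _ _)
    obtain ⟨L, R, hfac, _, _⟩ := exists_bdd_factorization B hrank hc0 hentry
    set S : Fin n → Fin d → ℝ := fun j k => R k j with hSdef
    have hS : ∀ i, S i ≠ 0 := by
      intro i hzero
      have h1 : B i i = 0 := by
        rw [hfac, Matrix.mul_apply]
        apply Finset.sum_eq_zero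
        intro k _
        have h2 : R k i = 0 := congrFun hzero k
        rw [h2, mul_zero]
      rw [hdiag i] at h1
      exact one_ne_zero h1
    have halpha : ∀ i, alphaI S i ≤ off n d := by
      intro i
      apply Real.sSup_le _ h0
      rintro r ⟨lam, hl1, hl2, hl3⟩
      have h4 : ∀ j, B i j = ∑ k, L i k * S j k := by
        intro j; rw [hfac, Matrix.mul_apply]
      have key : r = ∑ j, lam j * B i j := by
        calc r = r * B i i := by rw [hdiag i, mul_one]
          _ = r * ∑ k, L i k * S i k := by rw [h4 i]
          _ = ∑ k, L i k * (r • S i) k := by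
              rw [Finset.mul_sum]
              apply Finset.sum_congr rfl
              intro k _
              simp only [Pi.smul_apply, smul_eq_mul]
              ring
          _ = ∑ k, L i k * (∑ j, lam j • S j) k := by rw [hl3]
          _ = ∑ k, ∑ j, L i k * (lam j * S j k) := by
              apply Finset.sum_congr rfl
              intro k _
              rw [Finset.sum_apply, Finset.mul_sum]
              apply Finset.sum_congr rfl
              intro j _
              simp only [Pi.smul_apply, smul_eq_mul]
          _ = ∑ j, ∑ k, L i k * (lam j * S j k) := Finset.sum_comm
          _ = ∑ j, lam j * ∑ k, L i k * S j k := by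
              apply Finset.sum_congr rfl
              intro j _
              rw [Finset.mul_sum]
              apply Finset.sum_congr rfl
              intro k _
              ring
          _ = ∑ j, lam j * B i j := by
              apply Finset.sum_congr rfl
              intro j _
              rw [h4 j]
      calc r ≤ |r| := le_abs_self r
        _ = |∑ j, lam j * B i j| := by rw [key]
        _ ≤ ∑ j, |lam j| * |B i j| := by
            refine (Finset.abs_sum_le_sum_abs _ _).trans ?_
            apply Finset.sum_le_sum
            intro j _
            rw [abs_mul]
        _ ≤ ∑ j, |lam j| * off n d := by
            apply Finset.sum_le_sum
            intro j _
            by_cases hij : i = j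
            · subst hij; rw [hl1]; simp
            · exact mul_le_mul_of_nonneg_left (hoff i j hij) (abs_nonneg _)
        _ = (∑ j, |lam j|) * off n d := by rw [Finset.sum_mul]
        _ ≤ 1 * off n d := mul_le_mul_of_nonneg_right hl2 h0
        _ = off n d := one_mul _
    exact ⟨S, hS, le_antisymm (off_le_of_S hn S hS) (Real.iSup_le halpha h0)⟩
  · rintro ε ⟨S, hS, rfl⟩
    exact off_le_of_S hn S hS
end

section
/- Let n ≥ 3 and let 0 < ε < 1. Suppose: w_1,…,w_n are nonzero vectors in ℝ² whose angles θ_i ∈ [0,π) with the positive x-axis satisfy θ_1 ≤ … ≤ θ_n; Q is a real n×n matrix with Q_ii = 1 and |Q_ij| ≤ ε for i ≠ j; P is a real n×n matrix with P_ii = 1 whose columns p_i satisfy Σ_j (p_i)_j w_j = 0 and Al_i(p_i) = ε, with Qᵗ P = 0; and P_{ij} = 0 whenever |i − j| ≥ 2 and (i,j) ∉ {(1,n),(n,1)}, with P_{i,i+1} < 0 and P_{i+1,i} < 0 for 1 ≤ i ≤ n−1, and P_{1,n} > 0m, P_{n,1} > 0. Then for every diagonal matrix Λ with strictly positive diagonal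 entries satisfying P Λ Qᵗ = Qᵗ P Λ = 0, the matrix P Λ is symmetric. -/
open scoped ENNReal BigOperators
open Matrix
open Fin.NatCast

private lemma const_of_shift {n : ℕ} [NeZero n] (g : Fin n → ℝ)
    (h : ∀ j, g (j + 1) = g j) (j : Fin n) : g j = g 0 := by
  have key : ∀ m : ℕ, g (m : Fin n) = g 0 := by
    intro m
    induction m with
    | zero => norm_num
    | succ k ih =>
      have e : ((k + 1 : ℕ) : Fin n) = (k : Fin n) + 1 := by push_cast; ring
      rw [e, h, ih]
  have := key j.val
  rwa [Fin.cast_val_eq_self] at this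

private lemma sum_three {n : ℕ} [NeZero n] (f : Fin n → ℝ) (j : Fin n)
    (h12 : j - 1 ≠ j) (h13 : j - 1 ≠ j + 1) (h23 : j ≠ j + 1)
    (h0 : ∀ k, k ≠ j - 1 → k ≠ j → k ≠ j + 1 → f k = 0) :
    ∑ k, f k = f (j - 1) + f j + f (j + 1) := by
  have hsub : ({j - 1, j, j + 1} : Finset (Fin n)) ⊆ Finset.univ := Finset.subset_univ _
  have h1 : ∑ k ∈ ({j - 1, j, j + 1} : Finset (Fin n)), f k = ∑ k, f k := by
    apply Finset.sum_subset hsub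
    intro x _ hx
    simp only [Finset.mem_insert, Finset.mem_singleton, not_or] at hx
    exact h0 x hx.1 hx.2.1 hx.2.2
  rw [← h1, Finset.sum_insert (by simp [h12, h13]), Finset.sum_insert (by simp [h23]),
    Finset.sum_singleton]
  ring

private lemma sum_pair_erase {n : ℕ} [NeZero n] (f : Fin n → ℝ) (j : Fin n)
    (h12 : j - 1 ≠ j) (h13 : j - 1 ≠ j + 1) (h23 : j ≠ j + 1)
    (h0 : ∀ k, k ≠ j - 1 → k ≠ j → k ≠ j + 1 → f k = 0) :
    ∑ k ∈ Finset.univ.erase j, f k = f (j - 1) + f (j + 1) := by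
  have hsub : ({j - 1, j + 1} : Finset (Fin n)) ⊆ Finset.univ.erase j := by
    intro x hx
    simp only [Finset.mem_insert, Finset.mem_singleton] at hx
    rcases hx with rfl | rfl <;> simp [h12, Ne.symm h23]
  have h1 : ∑ k ∈ ({j - 1, j + 1} : Finset (Fin n)), f k = ∑ k ∈ Finset.univ.erase j, f k := by
    apply Finset.sum_subset hsub
    intro x hx hx2
    simp only [Finset.mem_insert, Finset.mem_singleton, not_or] at hx2
    exact h0 x hx2.1 (Finset.ne_of_mem_erase hx) hx2.2
  rw [← h1, Finset.sum_insert (by simp [h13]), Finset.sum_singleton]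

private theorem transfer_aux (n : ℕ) (hn : 1 ≤ n) (a b : ℝ) (ha : 0 < a) (hb : 0 < b)
    (T : Matrix (Fin 2) (Fin 2) ℝ)
    (hT2 : T ^ 2 = (1/b) • T - (a/b) • 1)
    (htr1 : T.trace = 1/b)
    (hkey : (a/b)^n + (T^n).trace + 1 = 0) : a = b := by
  set t : ℕ → ℝ := fun i => (T^i).trace with ht
  have htrec : ∀ i, t (i+2) = (1/b) * t (i+1) - (a/b) * t i := by
    intro i
    have hm : T^(i+2) = (1/b) • T^(i+1) - (a/b) • T^i := by
      have h0 : T^(i+2) = T^i * T^2 := pow_add T i 2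
      rw [h0, hT2, Matrix.mul_sub, mul_smul_comm, mul_smul_comm, mul_one, ← pow_succ]
    simp only [ht, hm, Matrix.trace_sub, Matrix.trace_smul, smul_eq_mul]
  have ht0 : t 0 = 2 := by simp [ht, Matrix.trace_one]
  have ht1 : t 1 = 1/b := by simpa [ht] using htr1
  have hind : ∀ (μ1 μ2 : ℂ), μ1 + μ2 = 1/(b:ℂ) → μ1 * μ2 = (a:ℂ)/b →
      ∀ i, (t i : ℂ) = μ1^i + μ2^i := by
    intro μ1 μ2 hs hp
    have hchar : ∀ μ : ℂ, μ = μ1 ∨ μ = μ2 → ∀ i, μ^(i+2) = (1/(b:ℂ)) * μ^(i+1) - ((a:ℂ)/b) * μ^i := by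
      rintro μ hμ i
      have h2 : μ^2 = (1/(b:ℂ)) * μ - (a:ℂ)/b := by
        rcases hμ with rfl | rfl
        · linear_combination μ * hs - hp
        · linear_combination μ * hs - hp
      calc μ^(i+2) = μ^i * μ^2 := by ring
      _ = (1/(b:ℂ)) * μ^(i+1) - ((a:ℂ)/b) * μ^i := by rw [h2]; ring
    have key : ∀ i, (t i : ℂ) = μ1^i + μ2^i ∧ (t (i+1) : ℂ) = μ1^(i+1) + μ2^(i+1) := by
      intro i
      induction i with
      | zero =>
        constructor
        · rw [ht0]; norm_num
        · rw [ht1]; push_cast; rw [pow_one, pow_one, hs]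
      | succ k ih =>
        refine ⟨ih.2, ?_⟩
        have h3 := htrec k
        have hcast : (t (k+2) : ℂ) = (1/(b:ℂ)) * (t (k+1) : ℂ) - ((a:ℂ)/b) * (t k : ℂ) := by
          rw [h3]; push_cast; ring
        rw [hcast, ih.1, ih.2, hchar μ1 (Or.inl rfl) k, hchar μ2 (Or.inr rfl) k]
        ring
    exact fun i => (key i).1
  rcases le_or_gt 0 (1 - 4*a*b) with hd | hd
  · -- real roots: contradiction
    exfalso
    obtain ⟨s, hsdef⟩ : ∃ s : ℝ, s = Real.sqrt (1 - 4*a*b) := ⟨_, rfl⟩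
    have hs2 : s^2 = 1 - 4*a*b := by rw [hsdef]; exact Real.sq_sqrt hd
    have hsnn : 0 ≤ s := by rw [hsdef]; exact Real.sqrt_nonneg _
    have hslt : s < 1 := by nlinarith
    obtain ⟨m1, hm1⟩ : ∃ m1 : ℝ, m1 = (1 + s)/(2*b) := ⟨_, rfl⟩
    obtain ⟨m2, hm2⟩ : ∃ m2 : ℝ, m2 = (1 - s)/(2*b) := ⟨_, rfl⟩
    have hsum : m1 + m2 = 1/b := by rw [hm1, hm2]; field_simp; norm_num
    have hprod : m1 * m2 = a/b := by rw [hm1, hm2]; field_simp; nlinarith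
    have h1 : (m1:ℂ) + (m2:ℂ) = 1/(b:ℂ) := by exact_mod_cast congrArg Complex.ofReal hsum
    have h2 : (m1:ℂ) * (m2:ℂ) = (a:ℂ)/(b:ℂ) := by exact_mod_cast congrArg Complex.ofReal hprod
    have htn : t n = m1^n + m2^n := by exact_mod_cast hind _ _ h1 h2 n
    have hm1p : 0 ≤ m1 := by rw [hm1]; positivity
    have hm2p : 0 ≤ m2 := by rw [hm2]; apply div_nonneg <;> linarith
    have h1n : 0 ≤ m1^n := pow_nonneg hm1p n
    have h2n : 0 ≤ m2^n := pow_nonneg hm2p n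
    have hab : 0 < (a/b)^n := by positivity
    rw [show (T^n).trace = t n from rfl, htn] at hkey
    linarith
  · -- complex roots
    obtain ⟨s, hsdef⟩ : ∃ s : ℝ, s = Real.sqrt (4*a*b - 1) := ⟨_, rfl⟩
    have hs2 : s^2 = 4*a*b - 1 := by rw [hsdef]; exact Real.sq_sqrt (by linarith)
    obtain ⟨x, hx⟩ : ∃ x : ℝ, x = 1/(2*b) := ⟨_, rfl⟩
    obtain ⟨y, hy⟩ : ∃ y : ℝ, y = s/(2*b) := ⟨_, rfl⟩
    obtain ⟨z1, hz1⟩ : ∃ z : ℂ, z = (x:ℂ) + (y:ℂ)*Complex.I := ⟨_, rfl⟩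
    obtain ⟨z2, hz2⟩ : ∃ z : ℂ, z = (x:ℂ) - (y:ℂ)*Complex.I := ⟨_, rfl⟩
    have hxy : x^2 + y^2 = a/b := by rw [hx, hy]; field_simp; nlinarith
    have h1 : z1 + z2 = 1/(b:ℂ) := by
      rw [hz1, hz2, hx]
      have : ((1/(2*b) : ℝ) : ℂ) + ((1/(2*b) : ℝ) : ℂ) = 1/(b:ℂ) := by
        push_cast; field_simp; ring
      calc ((1/(2*b):ℝ):ℂ) + (y:ℂ)*Complex.I + (((1/(2*b):ℝ):ℂ) - (y:ℂ)*Complex.I)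
          = ((1/(2*b):ℝ):ℂ) + ((1/(2*b):ℝ):ℂ) := by ring
      _ = 1/(b:ℂ) := this
    have h2 : z1 * z2 = (a:ℂ)/(b:ℂ) := by
      have e1 : z1 * z2 = (x:ℂ)^2 + (y:ℂ)^2 := by
        rw [hz1, hz2]; ring_nf; rw [Complex.I_sq]; ring
      have e2 : ((x:ℂ)^2 + (y:ℂ)^2) = ((x^2 + y^2 : ℝ) : ℂ) := by push_cast; ring
      have e3 : ((a/b : ℝ) : ℂ) = (a:ℂ)/(b:ℂ) := by push_cast; ring
      rw [e1, e2, hxy, e3]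
    have htn := hind _ _ h1 h2 n
    have hconj : z2 = (starRingEnd ℂ) z1 := by
      rw [hz1, hz2, map_add, _root_.map_mul, Complex.conj_I, Complex.conj_ofReal,
        Complex.conj_ofReal]
      ring
    have hre : (t n : ℂ) = 2 * ((z1^n).re : ℝ) := by
      rw [htn, hconj, ← map_pow, Complex.add_conj]
      push_cast; ring
    have htnre : t n = 2 * (z1^n).re := by exact_mod_cast hre
    obtain ⟨A, hA⟩ : ∃ A : ℝ, A = ‖z1‖ := ⟨_, rfl⟩
    have hAnn : 0 ≤ A := by rw [hA]; exact norm_nonneg _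
    have hA2 : A^2 = a/b := by
      have h1' : Complex.normSq z1 = x^2 + y^2 := by
        rw [hz1]; simpa using Complex.normSq_add_mul_I x y
      rw [hA, Complex.sq_norm, h1', hxy]
    have hrebound : |(z1^n).re| ≤ A^n := by
      calc |(z1^n).re| ≤ ‖z1^n‖ := Complex.abs_re_le_norm _
      _ = A^n := by rw [norm_pow, hA]
    have hpow : (A^n)^2 = (a/b)^n := by rw [← pow_mul, mul_comm, pow_mul, hA2]
    have hkey' : (A^n)^2 + t n + 1 = 0 := by
      rw [hpow]; simpa [ht] using hkey
    have hlow : -(A^n) ≤ (z1^n).re := by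
      have := (abs_le.mp hrebound).1; linarith
    have expand : (A^n - 1)^2 = (A^n)^2 - 2*A^n + 1 := by ring
    have hsq : (A^n - 1)^2 ≤ 0 := by linarith
    have h0 : (A^n - 1)^2 = 0 := le_antisymm hsq (sq_nonneg _)
    have hAn1 : A^n = 1 := by
      have := pow_eq_zero_iff (n := 2) (by norm_num) |>.mp h0
      linarith
    have hA1 : A = 1 := by
      rcases lt_trichotomy A 1 with h | h | h
      · exact absurd hAn1 (by have := pow_lt_one₀ hAnn h (by omega : n ≠ 0); linarith)
      · exact h
      · exact absurd hAn1 (by have := one_lt_pow₀ h (by omega : n ≠ 0); linarith)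
    have hfin : a/b = 1 := by rw [← hA2, hA1]; ring
    field_simp at hfin
    linarith

private theorem transfer (n : ℕ) (hn : 1 ≤ n) (a b : ℝ) (ha : 0 < a) (hb : 0 < b)
    (u : Fin 2 → ℝ) (hu : u ≠ 0)
    (h : (!![1/b, -(a/b); 1, 0] ^ n) *ᵥ u = -u) : a = b := by
  set T : Matrix (Fin 2) (Fin 2) ℝ := !![1/b, -(a/b); 1, 0] with hT
  have hT2 : T ^ 2 = (1/b) • T - (a/b) • 1 := by
    ext i j
    fin_cases i <;> fin_cases j <;>
      (simp [hT, pow_two, Matrix.mul_apply, Fin.sum_univ_two, Matrix.one_apply]; try ring)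
  have htr1 : T.trace = 1/b := by simp [hT, Matrix.trace_fin_two]
  have hkervec : (T ^ n + 1) *ᵥ u = 0 := by
    rw [Matrix.add_mulVec, Matrix.one_mulVec, h]; simp
  have hker : (T ^ n + 1).det = 0 :=
    Matrix.exists_mulVec_eq_zero_iff.mp ⟨u, hu, hkervec⟩
  have hdaddone : ∀ M : Matrix (Fin 2) (Fin 2) ℝ, (M + 1).det = M.det + M.trace + 1 := by
    intro M
    simp [Matrix.det_fin_two, Matrix.trace_fin_two, Matrix.add_apply, Matrix.one_apply]
    ring
  have hdetT : T.det = a/b := by simp [hT, Matrix.det_fin_two]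
  have hkey : (a/b)^n + (T^n).trace + 1 = 0 := by
    have h6 := hdaddone (T^n); rw [hker] at h6; rw [Matrix.det_pow, hdetT] at h6; linarith
  exact transfer_aux n hn a b ha hb T hT2 htr1 hkey

/-- Under the structural hypotheses on `w`, `Q` and `P` arising in the rank-2 analysis
(diagonal of `P` equal to `1`, columns of `P` are linear dependencies of the `w_j` of
alignment `ε`, `Qᵗ P = 0`, tridiagonal-with-corners sign pattern of `P`): for every
diagonal `Λ` with positive diagonal satisfying `P Λ Qᵗ = Qᵗ P Λ = 0`, the matrix `P Λ`
is symmetric. -/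
theorem PLambda_symm (n : ℕ) [NeZero n] (hn : 3 ≤ n) (ε : ℝ) (hε0 : 0 < ε) (hε1 : ε < 1)
    (w : Fin n → (Fin 2 → ℝ)) (hw : ∀ i, w i ≠ 0)
    (θ : Fin n → ℝ) (hθ : ∀ i, θ i ∈ Set.Ico 0 Real.pi) (hmono : Monotone θ)
    (hangle : ∀ i, ∃ r : ℝ, r ≠ 0 ∧ w i = r • ![Real.cos (θ i), Real.sin (θ i)])
    (Q : Matrix (Fin n) (Fin n) ℝ)
    (hQdiag : ∀ i, Q i i = 1) (hQoff : ∀ i j, i ≠ j → |Q i j| ≤ ε)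
    (P : Matrix (Fin n) (Fin n) ℝ) (hPdiag : ∀ i, P i i = 1)
    (hPdep : ∀ i, ∑ j, P j i • w j = 0)
    (hPAl : ∀ i, Ali i (fun j => P j i) = ENNReal.ofReal ε)
    (hQP : Qᵀ * P = 0)
    (hPzero : ∀ i j : Fin n, 2 ≤ ((i.val : ℤ) - (j.val : ℤ)).natAbs →
      ¬(i.val = 0 ∧ j.val = n - 1) → ¬(i.val = n - 1 ∧ j.val = 0) → P i j = 0)
    (hPsup : ∀ i j : Fin n, j.val = i.val + 1 → P i j < 0)
    (hPsub : ∀ i j : Fin n, i.val = j.val + 1 → P i j < 0)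
    (hP1n : 0 < P ⟨0, by omega⟩ ⟨n - 1, by omega⟩)
    (hPn1 : 0 < P ⟨n - 1, by omega⟩ ⟨0, by omega⟩) :
    ∀ lam : Fin n → ℝ, (∀ i, 0 < lam i) →
      P * Matrix.diagonal lam * Qᵀ = 0 → Qᵀ * (P * Matrix.diagonal lam) = 0 →
      (P * Matrix.diagonal lam).IsSymm := by
  intro lam hlam h1 _h2
  -- basic Fin value lemmas
  have hv1 : (1 : Fin n).val = 1 := by
    have h0 := Fin.val_one' n
    have h1 : 1 % n = 1 := Nat.mod_eq_of_lt (by omega)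
    omega
  have hvadd : ∀ j : Fin n, (j + 1).val = if j.val = n - 1 then 0 else j.val + 1 := by
    intro j
    have h0 := Fin.val_add j 1
    rw [hv1] at h0
    have hj := j.isLt
    by_cases h : j.val = n - 1
    · rw [if_pos h, h0, h]
      have e : n - 1 + 1 = n := by omega
      rw [e, Nat.mod_self]
    · rw [if_neg h, h0, Nat.mod_eq_of_lt (by omega)]
  have hvsub : ∀ j : Fin n, (j - 1).val = if j.val = 0 then n - 1 else j.val - 1 := by
    intro j
    have h0 := Fin.coe_sub j 1
    rw [hv1] at h0
    have hj := j.isLt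
    by_cases h : j.val = 0
    · rw [if_pos h, h0, h]
      rw [Nat.add_zero, Nat.mod_eq_of_lt (by omega)]
    · rw [if_neg h, h0]
      have e : n - 1 + j.val = (j.val - 1) + n := by omega
      rw [e, Nat.add_mod_right, Nat.mod_eq_of_lt (by omega)]
  have hne1 : ∀ j : Fin n, j - 1 ≠ j := by
    intro j h
    have := congrArg Fin.val h
    rw [hvsub] at this
    have hj := j.isLt
    split_ifs at this <;> omega
  have hne2 : ∀ j : Fin n, j ≠ j + 1 := by
    intro j h
    have := congrArg Fin.val h
    rw [hvadd] at this
    have hj := j.isLt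
    split_ifs at this <;> omega
  have hne3 : ∀ j : Fin n, j - 1 ≠ j + 1 := by
    intro j h
    have := congrArg Fin.val h
    rw [hvsub, hvadd] at this
    have hj := j.isLt
    split_ifs at this <;> omega
  have hcancel1 : ∀ j : Fin n, j - 1 + 1 = j := fun j => sub_add_cancel j 1
  have hcancel2 : ∀ j : Fin n, j + 1 - 1 = j := fun j => add_sub_cancel_right j 1
  -- support of columns of P
  have hsupport : ∀ k j : Fin n, k ≠ j - 1 → k ≠ j → k ≠ j + 1 → P k j = 0 := by
    intro k j hk1 hk2 hk3
    have hkl := k.isLt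
    have hjl := j.isLt
    have e1 : ¬(k.val = j.val) := fun h => hk2 (Fin.ext h)
    have e2 : ¬(k.val = j.val + 1) := by
      intro h
      apply hk3
      apply Fin.ext
      rw [hvadd, if_neg (by omega)]
      omega
    have e3 : ¬(j.val = k.val + 1) := by
      intro h
      apply hk1
      apply Fin.ext
      rw [hvsub, if_neg (by omega)]
      omega
    have e4 : ¬(k.val = 0 ∧ j.val = n - 1) := by
      rintro ⟨h, h'⟩
      apply hk3
      apply Fin.ext
      rw [hvadd, if_pos h']
      omega
    have e5 : ¬(k.val = n - 1 ∧ j.val = 0) := by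
      rintro ⟨h, h'⟩
      apply hk1
      apply Fin.ext
      rw [hvsub, if_pos h']
      omega
    exact hPzero k j (by omega) e4 e5
  have hrowsupport : ∀ i k : Fin n, k ≠ i - 1 → k ≠ i → k ≠ i + 1 → P i k = 0 := by
    intro i k hk1 hk2 hk3
    apply hsupport i k
    · intro h; apply hk3; rw [h, hcancel1]
    · intro h; apply hk2; rw [h]
    · intro h; apply hk1; rw [h, hcancel2]
  -- sign lemmas
  have hAneg : ∀ j : Fin n, j.val ≠ n - 1 → P j (j + 1) < 0 := by
    intro j h
    apply hPsup
    rw [hvadd, if_neg h]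
  have hAcor : ∀ j : Fin n, j.val = n - 1 → 0 < P j (j + 1) := by
    intro j h
    have e1 : j = ⟨n - 1, by omega⟩ := Fin.ext h
    have e2 : j + 1 = ⟨0, by omega⟩ := by
      apply Fin.ext; rw [hvadd, if_pos h]
    have goal : P j (j + 1) = P ⟨n - 1, by omega⟩ ⟨0, by omega⟩ := by
      congr 1
    rw [goal]; exact hPn1
  have hBneg : ∀ j : Fin n, j.val ≠ 0 → P j (j - 1) < 0 := by
    intro j h
    apply hPsub
    rw [hvsub, if_neg h]
    omega
  have hBcor : ∀ j : Fin n, j.val = 0 → 0 < P j (j - 1) := by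
    intro j h
    have e1 : j = ⟨0, by omega⟩ := Fin.ext h
    have e2 : j - 1 = ⟨n - 1, by omega⟩ := by
      apply Fin.ext; rw [hvsub, if_pos h]
    have goal : P j (j - 1) = P ⟨0, by omega⟩ ⟨n - 1, by omega⟩ := by
      congr 1
    rw [goal]; exact hP1n
  have hAne : ∀ j : Fin n, P j (j + 1) ≠ 0 := by
    intro j
    by_cases h : j.val = n - 1
    · exact ne_of_gt (hAcor j h)
    · exact ne_of_lt (hAneg j h)
  have hBne : ∀ j : Fin n, P j (j - 1) ≠ 0 := by
    intro j
    by_cases h : j.val = 0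
    · exact ne_of_gt (hBcor j h)
    · exact ne_of_lt (hBneg j h)
  have hApos : ∀ j : Fin n, 0 < |P j (j + 1)| := fun j => abs_pos.mpr (hAne j)
  have hBpos : ∀ j : Fin n, 0 < |P j (j - 1)| := fun j => abs_pos.mpr (hBne j)
  -- edge sign-product lemma : P j (j+1) and P (j+1) j share the same sign
  have hvadd0 : ∀ j : Fin n, ((j + 1).val = 0) ↔ (j.val = n - 1) := by
    intro j
    rw [hvadd]
    constructor
    · intro h; by_contra hc; rw [if_neg hc] at h; omega
    · intro h; rw [if_pos h]
  have hedge : ∀ j : Fin n, P j (j + 1) * P (j + 1) j = |P j (j + 1)| * |P (j + 1) j| := by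
    intro j
    have hrw : P (j + 1) ((j + 1) - 1) = P (j + 1) j := by rw [hcancel2]
    by_cases h : j.val = n - 1
    · have h1 := hAcor j h
      have h2 := hBcor (j + 1) ((hvadd0 j).mpr h)
      rw [hcancel2] at h2
      rw [abs_of_pos h1, abs_of_pos h2]
    · have h1 := hAneg j h
      have h2 := hBneg (j + 1) (fun hc => h ((hvadd0 j).mp hc))
      rw [hcancel2] at h2
      rw [abs_of_neg h1, abs_of_neg h2]
      ring
  -- column sums of |P| equal 1/ε
  have hcol : ∀ j : Fin n, ε * (|P (j - 1) j| + |P (j + 1) j|) = 1 := by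
    intro j
    have hAl : ENNReal.ofReal |P j j| /
        ENNReal.ofReal (∑ k ∈ Finset.univ.erase j, |P k j|) = ENNReal.ofReal ε := hPAl j
    have hsum : ∑ k ∈ Finset.univ.erase j, |P k j| =
        |P (j - 1) j| + |P (j + 1) j| := by
      apply sum_pair_erase (fun k => |P k j|) j (hne1 j) (hne3 j) (hne2 j)
      intro k h1' h2' h3'
      rw [hsupport k j h1' h2' h3', abs_zero]
    have hApos' : 0 < |P (j - 1) j| := by
      have := hApos (j - 1); rwa [hcancel1] at this
    have hBpos' : 0 < |P (j + 1) j| := by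
      have := hBpos (j + 1); rwa [hcancel2] at this
    have hSpos : 0 < |P (j - 1) j| + |P (j + 1) j| := by linarith
    rw [hsum, hPdiag j, abs_one] at hAl
    rw [← ENNReal.ofReal_div_of_pos hSpos] at hAl
    have heq : 1 / (|P (j - 1) j| + |P (j + 1) j|) = ε :=
      (ENNReal.ofReal_eq_ofReal_iff (by positivity) (le_of_lt hε0)).mp hAl
    field_simp at heq
    linarith
  -- (QᵀP) entries
  have hQPentry : ∀ j' j : Fin n,
      Q (j - 1) j' * P (j - 1) j + Q j j' * P j j + Q (j + 1) j' * P (j + 1) j = 0 := by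
    intro j' j
    have h0 : (Qᵀ * P) j' j = 0 := by rw [hQP]; rfl
    rw [Matrix.mul_apply] at h0
    have h0' : ∑ k, Q k j' * P k j = 0 := by
      rw [← h0]; apply Finset.sum_congr rfl; intro k _; rw [Matrix.transpose_apply]
    rw [sum_three (fun k => Q k j' * P k j) j (hne1 j) (hne3 j) (hne2 j)
      (fun k hk1 hk2 hk3 => by show Q k j' * P k j = 0; rw [hsupport k j hk1 hk2 hk3, mul_zero])] at h0'
    exact h0'
  -- (P Λ Qᵀ) entries
  have hPLQ : ∀ i j : Fin n,
      P i (i - 1) * lam (i - 1) * Q j (i - 1) + P i i * lam i * Q j i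
        + P i (i + 1) * lam (i + 1) * Q j (i + 1) = 0 := by
    intro i j
    have h0 : (P * Matrix.diagonal lam * Qᵀ) i j = 0 := by rw [h1]; rfl
    rw [Matrix.mul_apply] at h0
    have h0' : ∑ k, P i k * lam k * Q j k = 0 := by
      rw [← h0]; apply Finset.sum_congr rfl; intro k _
      rw [Matrix.mul_diagonal, Matrix.transpose_apply]
    rw [sum_three (fun k => P i k * lam k * Q j k) i (hne1 i) (hne3 i) (hne2 i)
      (fun k hk1 hk2 hk3 => by show P i k * lam k * Q j k = 0; rw [hrowsupport i k hk1 hk2 hk3, zero_mul, zero_mul])] at h0'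
    exact h0'
  -- equality case: Q on the support of P
  have hK2 : ∀ k j : Fin n, k ≠ j → Q k j * P k j = -(ε * |P k j|) := by
    intro k j hkj
    have hbound : ∀ k' : Fin n, k' ≠ j → 0 ≤ Q k' j * P k' j + ε * |P k' j| := by
      intro k' hk'
      have hb1 : |Q k' j * P k' j| ≤ ε * |P k' j| := by
        rw [abs_mul]
        exact mul_le_mul_of_nonneg_right (hQoff k' j hk') (abs_nonneg _)
      have hb2 := neg_abs_le (Q k' j * P k' j)
      linarith
    have hdiag := hQPentry j j
    rw [hQdiag j, hPdiag j, one_mul] at hdiag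
    have hzero : (Q (j - 1) j * P (j - 1) j + ε * |P (j - 1) j|)
        + (Q (j + 1) j * P (j + 1) j + ε * |P (j + 1) j|) = 0 := by
      have := hcol j; linarith
    have hz1 : Q (j - 1) j * P (j - 1) j + ε * |P (j - 1) j| = 0 := by
      have ha' := hbound (j - 1) (hne1 j)
      have hb' := hbound (j + 1) (Ne.symm (hne2 j))
      linarith
    have hz2 : Q (j + 1) j * P (j + 1) j + ε * |P (j + 1) j| = 0 := by
      have ha' := hbound (j - 1) (hne1 j)
      linarith
    by_cases hc1 : k = j - 1
    · rw [hc1]; linarith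
    by_cases hc2 : k = j + 1
    · rw [hc2]; linarith
    · rw [hsupport k j hc1 hkj hc2, mul_zero, abs_zero, mul_zero, neg_zero]
  -- the λ recurrence
  have hF3 : ∀ j : Fin n,
      lam j = ε * (|P j (j - 1)| * lam (j - 1) + |P j (j + 1)| * lam (j + 1)) := by
    intro j
    have e := hPLQ j j
    rw [hPdiag j, hQdiag j] at e
    have k2a := hK2 j (j - 1) (Ne.symm (hne1 j))
    have k2b := hK2 j (j + 1) (hne2 j)
    linear_combination e - lam (j - 1) * k2a - lam (j + 1) * k2b
  -- the key quadratic relation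
  have hMstar : ∀ j : Fin n,
      -(|P (j - 1) j| * |P j (j - 1)| * lam (j - 1)) + ε * |P j (j - 1)| * lam (j - 1)
        - ε * |P (j + 1) j| * lam j + |P j (j + 1)| * |P (j + 1) j| * lam (j + 1) = 0 := by
    intro j
    have e3a := hQPentry (j - 1) j
    rw [hQdiag (j - 1), hPdiag j] at e3a
    have e4a := hPLQ j (j + 1)
    rw [hPdiag j, hQdiag (j + 1)] at e4a
    have k2a := hK2 j (j - 1) (Ne.symm (hne1 j))
    have k2b' := hK2 (j + 1) j (Ne.symm (hne2 j))
    have hedgeA := hedge j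
    have hedgeB := hedge (j - 1)
    rw [hcancel1 j] at hedgeB
    linear_combination (P (j + 1) j) * e4a - (P j (j - 1) * lam (j - 1)) * e3a
      - lam j * k2b' - lam (j + 1) * hedgeA + lam (j - 1) * hedgeB + lam (j - 1) * k2a
  -- constancy of the symmetry defect
  have hT1 : ∀ j : Fin n,
      |P j (j + 1)| * lam (j + 1) - |P (j + 1) j| * lam j
        = |P (j - 1) j| * lam j - |P j (j - 1)| * lam (j - 1) := by
    intro j
    have h' : ε * ((|P j (j + 1)| * lam (j + 1) - |P (j + 1) j| * lam j)
        - (|P (j - 1) j| * lam j - |P j (j - 1)| * lam (j - 1))) = 0 := by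
      linear_combination (-(lam j)) * hcol j - hF3 j
    rcases mul_eq_zero.mp h' with h'' | h''
    · exact absurd h'' (ne_of_gt hε0)
    · linarith
  have hT2 : ∀ j : Fin n,
      (|P j (j + 1)| * lam (j + 1) - |P (j - 1) j| * lam j)
        * (|P (j + 1) j| + |P (j - 1) j| - ε) = 0 := by
    intro j
    linear_combination hMstar j + (|P (j - 1) j| - ε) * hT1 j
  have hfac : ∀ j : Fin n, 0 < |P (j + 1) j| + |P (j - 1) j| - ε := by
    intro j
    have h := hcol j
    nlinarith [h, hε0, hε1]
  have hD : ∀ j : Fin n, |P j (j + 1)| * lam (j + 1) = |P (j - 1) j| * lam j := by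
    intro j
    rcases mul_eq_zero.mp (hT2 j) with h' | h'
    · linarith
    · exact absurd h' (ne_of_gt (hfac j))
  have hC : ∀ j : Fin n, |P (j + 1) j| * lam j = |P j (j - 1)| * lam (j - 1) := by
    intro j
    linear_combination hD j - hT1 j
  -- constancy around the cycle
  have hDD : ∀ j : Fin n, |P j (j + 1)| * lam (j + 1) = |P 0 (0 + 1)| * lam (0 + 1) := by
    intro j
    have hshift : ∀ i : Fin n,
        (fun j : Fin n => |P j (j + 1)| * lam (j + 1)) (i + 1)
          = (fun j : Fin n => |P j (j + 1)| * lam (j + 1)) i := by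
      intro i
      show |P (i + 1) (i + 1 + 1)| * lam (i + 1 + 1) = |P i (i + 1)| * lam (i + 1)
      have h' := hD (i + 1)
      rwa [hcancel2] at h'
    exact const_of_shift (fun j : Fin n => |P j (j + 1)| * lam (j + 1)) hshift j
  have hCC : ∀ j : Fin n, |P (j + 1) j| * lam j = |P (0 + 1) 0| * lam 0 := by
    intro j
    have hshift : ∀ i : Fin n,
        (fun j : Fin n => |P (j + 1) j| * lam j) (i + 1)
          = (fun j : Fin n => |P (j + 1) j| * lam j) i := by
      intro i
      show |P (i + 1 + 1) (i + 1)| * lam (i + 1) = |P (i + 1) i| * lam i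
      have h' := hC (i + 1)
      rwa [hcancel2] at h'
    exact const_of_shift (fun j : Fin n => |P (j + 1) j| * lam j) hshift j
  -- the diagonal λ is constant
  have hlamconst : ∀ j : Fin n, lam j = lam 0 := by
    have hval : ∀ j : Fin n,
        lam j = ε * (|P 0 (0 + 1)| * lam (0 + 1) + |P (0 + 1) 0| * lam 0) := by
      intro j
      have e1 : |P (j - 1) j| * lam j = |P 0 (0 + 1)| * lam (0 + 1) := by
        have h' := hDD (j - 1); rwa [hcancel1] at h'
      have e2 : |P (j + 1) j| * lam j = |P (0 + 1) 0| * lam 0 := hCC j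
      linear_combination (-(lam j)) * hcol j + ε * e1 + ε * e2
    intro j
    rw [hval j]
    exact (hval 0).symm
  -- the off-diagonal magnitudes are constant
  obtain ⟨a, hadef⟩ : ∃ a : ℝ, a = |P 0 (0 + 1)| := ⟨_, rfl⟩
  obtain ⟨b, hbdef⟩ : ∃ b : ℝ, b = |P (0 + 1) 0| := ⟨_, rfl⟩
  have haval : ∀ j : Fin n, |P j (j + 1)| = a := by
    intro j
    have e := hDD j
    rw [hlamconst (j + 1), hlamconst (0 + 1)] at e
    rw [hadef]
    exact mul_right_cancel₀ (ne_of_gt (hlam 0)) e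
  have hbval : ∀ j : Fin n, |P (j + 1) j| = b := by
    intro j
    have e := hCC j
    rw [hlamconst j] at e
    rw [hbdef]
    exact mul_right_cancel₀ (ne_of_gt (hlam 0)) e
  have hapos : 0 < a := by rw [hadef]; exact hApos 0
  have hbpos : 0 < b := by
    rw [hbdef]
    have h' := hBpos (0 + 1)
    rwa [hcancel2] at h'
  -- signed values of the off-diagonal entries
  have hPmval : ∀ j : Fin n, P (j - 1) j = if j.val = 0 then a else -a := by
    intro j
    have habs : |P (j - 1) j| = a := by
      have h' := haval (j - 1); rwa [hcancel1] at h'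
    by_cases h : j.val = 0
    · rw [if_pos h]
      have hpos : 0 < P (j - 1) j := by
        have h' := hAcor (j - 1) (by rw [hvsub, if_pos h])
        rwa [hcancel1] at h'
      rw [← habs, abs_of_pos hpos]
    · rw [if_neg h]
      have hneg : P (j - 1) j < 0 := by
        have hjl := j.isLt
        have h' := hAneg (j - 1) (by rw [hvsub, if_neg h]; omega)
        rwa [hcancel1] at h'
      rw [← habs, abs_of_neg hneg, neg_neg]
  have hPpval : ∀ j : Fin n, P (j + 1) j = if j.val = n - 1 then b else -b := by
    intro j
    have habs : |P (j + 1) j| = b := hbval j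
    by_cases h : j.val = n - 1
    · rw [if_pos h]
      have hpos : 0 < P (j + 1) j := by
        have h' := hBcor (j + 1) ((hvadd0 j).mpr h)
        rwa [hcancel2] at h'
      rw [← habs, abs_of_pos hpos]
    · rw [if_neg h]
      have hneg : P (j + 1) j < 0 := by
        have h' := hBneg (j + 1) (fun hc => h ((hvadd0 j).mp hc))
        rwa [hcancel2] at h'
      rw [← habs, abs_of_neg hneg, neg_neg]
  -- P(j,j+1) = P(j+1,j) will follow once a = b
  -- pick a coordinate where w 0 is nonzero
  obtain ⟨c, hc⟩ : ∃ c : Fin 2, w 0 c ≠ 0 := by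
    by_contra h
    push_neg at h
    exact hw 0 (funext h)
  -- coordinatewise dependency relations
  have hdep : ∀ j : Fin n,
      P (j - 1) j * w (j - 1) c + w j c + P (j + 1) j * w (j + 1) c = 0 := by
    intro j
    have h0 := hPdep j
    have h0' : ∑ k, P k j * w k c = 0 := by
      have h3 := congrFun h0 c
      rw [Finset.sum_apply] at h3
      simpa using h3
    rw [sum_three (fun k => P k j * w k c) j (hne1 j) (hne3 j) (hne2 j)
      (fun k h1' h2' h3' => by
        show P k j * w k c = 0
        rw [hsupport k j h1' h2' h3', zero_mul])] at h0'
    rw [hPdiag j, one_mul] at h0'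
    exact h0'
  -- ℕ-cast facts
  have hvnat : ∀ m : ℕ, m < n → ((m : Fin n)).val = m := by
    intro m hm
    rw [Fin.val_natCast]
    exact Nat.mod_eq_of_lt hm
  have hcast1 : ∀ m : ℕ, ((m + 1 : ℕ) : Fin n) = (m : Fin n) + 1 := by
    intro m; push_cast; ring
  have hcastsub : ∀ m : ℕ, 1 ≤ m → ((m : Fin n) - 1) = ((m - 1 : ℕ) : Fin n) := by
    intro m hm
    have e : ((m - 1 : ℕ) : Fin n) + 1 = (m : Fin n) := by
      rw [← hcast1 (m - 1)]
      congr 1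
      omega
    rw [← e, add_sub_cancel_right]
  -- scalar sequences
  obtain ⟨x, hxdef⟩ : ∃ x : ℕ → ℝ, x = fun m : ℕ => w ((m : Fin n)) c := ⟨_, rfl⟩
  obtain ⟨X, hXdef⟩ : ∃ X : ℕ → ℝ, X = fun m : ℕ => if m < n then x m else -(x (m - n)) :=
    ⟨_, rfl⟩
  have hxval : ∀ m : ℕ, x m = w ((m : Fin n)) c := fun m => by rw [hxdef]
  have hXlt : ∀ m : ℕ, m < n → X m = x m := by
    intro m hm; rw [hXdef]; exact if_pos hm
  have hXge : ∀ m : ℕ, n ≤ m → X m = -(x (m - n)) := by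
    intro m hm; rw [hXdef]; exact if_neg (by omega)
  have hx0 : x 0 = w 0 c := by rw [hxval 0]; norm_num
  have hx1 : x 1 = w 1 c := by rw [hxval 1]; norm_num
  -- the three-term recurrences
  have hR : ∀ m : ℕ, 1 ≤ m → m ≤ n → b * X (m + 1) = X m - a * X (m - 1) := by
    intro m h1m h2m
    by_cases hce : m ≤ n - 2
    · -- interior case
      have hmn : m < n := by omega
      have e := hdep (m : Fin n)
      have hjval : ((m : Fin n)).val = m := hvnat m hmn
      have hPm : P ((m : Fin n) - 1) ((m : Fin n)) = -a := by
        rw [hPmval ((m : Fin n)), hjval, if_neg (show ¬ (m = 0) from by omega)]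
      have hPp : P ((m : Fin n) + 1) ((m : Fin n)) = -b := by
        rw [hPpval ((m : Fin n)), hjval, if_neg (show ¬ (m = n - 1) from by omega)]
      rw [hPm, hPp, hcastsub m h1m,
        show ((m : Fin n) + 1) = ((m + 1 : ℕ) : Fin n) from (hcast1 m).symm] at e
      rw [hXlt (m + 1) (by omega), hXlt m (by omega), hXlt (m - 1) (by omega),
        hxval (m + 1), hxval m, hxval (m - 1)]
      linarith
    · by_cases hce2 : m = n - 1
      · -- wrap-around at n - 1
        rw [hce2]
        have e := hdep ((n - 1 : ℕ) : Fin n)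
        have hjval : (((n - 1 : ℕ) : Fin n)).val = n - 1 := hvnat _ (by omega)
        have hPm : P (((n - 1 : ℕ) : Fin n) - 1) (((n - 1 : ℕ) : Fin n)) = -a := by
          rw [hPmval, hjval, if_neg (show ¬ (n - 1 = 0) from by omega)]
        have hPp : P (((n - 1 : ℕ) : Fin n) + 1) (((n - 1 : ℕ) : Fin n)) = b := by
          rw [hPpval, hjval, if_pos rfl]
        rw [hPm, hPp, hcastsub (n - 1) (by omega),
          show (((n - 1 : ℕ) : Fin n) + 1) = ((n : ℕ) : Fin n) from by
            rw [← hcast1 (n - 1)]; congr 1; omega,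
          show ((n : ℕ) : Fin n) = 0 from Fin.natCast_self n] at e
        rw [hXlt (n - 1) (by omega), hXlt (n - 1 - 1) (by omega),
          hXge (n - 1 + 1) (by omega),
          show n - 1 + 1 - n = 0 from by omega,
          hxval (n - 1), hxval (n - 1 - 1), hx0]
        linarith
      · -- wrap-around at n
        have hmn : m = n := by omega
        rw [hmn]
        have e := hdep (0 : Fin n)
        have hjval : ((0 : Fin n)).val = 0 := Fin.val_zero n
        have hPm : P ((0 : Fin n) - 1) (0 : Fin n) = a := by
          rw [hPmval, hjval, if_pos rfl]
        have hPp : P ((0 : Fin n) + 1) (0 : Fin n) = -b := by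
          rw [hPpval, hjval, if_neg (show ¬ ((0 : ℕ) = n - 1) from by omega)]
        rw [hPm, hPp,
          show ((0 : Fin n) - 1) = ((n - 1 : ℕ) : Fin n) from by
            apply Fin.ext
            rw [hvsub, hvnat (n - 1) (by omega), Fin.val_zero, if_pos rfl],
          show ((0 : Fin n) + 1) = ((1 : ℕ) : Fin n) from by norm_num] at e
        rw [hXge (n + 1) (by omega), hXge n (by omega),
          show n + 1 - n = 1 from by omega, show n - n = 0 from by omega,
          hXlt (n - 1) (by omega), hxval (n - 1), hx0, hx1]
        have hw1 : w ((1 : ℕ) : Fin n) c = w 1 c := by norm_num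
        rw [hw1] at e
        linarith
  -- transfer-matrix iteration
  have hbne : b ≠ 0 := ne_of_gt hbpos
  have hstep : ∀ p q : ℝ, (!![1/b, -(a/b); 1, 0]) *ᵥ ![p, q] = ![(p - a*q)/b, p] := by
    intro p q
    funext r
    fin_cases r <;>
      (simp [Matrix.mulVec, dotProduct, Fin.sum_univ_two]; try (field_simp; ring))
  have hiter : ∀ i : ℕ, i ≤ n →
      (!![1/b, -(a/b); 1, 0] ^ i) *ᵥ ![x 1, x 0] = ![X (i + 1), X i] := by
    intro i
    induction i with
    | zero =>
      intro _
      rw [pow_zero, Matrix.one_mulVec]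
      funext r
      fin_cases r <;> simp [hXlt 1 (by omega), hXlt 0 (by omega)]
    | succ k ih =>
      intro hk
      rw [pow_succ', ← Matrix.mulVec_mulVec, ih (by omega), hstep]
      have hk2 : X (k + 1 + 1) = (X (k + 1) - a * X k) / b := by
        have h' := hR (k + 1) (by omega) (by omega)
        rw [Nat.add_sub_cancel] at h'
        field_simp
        linarith
      funext r
      fin_cases r
      · show (X (k + 1) - a * X k) / b = X (k + 1 + 1)
        rw [hk2]
      · rfl
  have hfin := hiter n le_rfl
  have hXn1 : X (n + 1) = -(x 1) := by
    rw [hXge (n + 1) (by omega), show n + 1 - n = 1 from by omega]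
  have hXn : X n = -(x 0) := by
    rw [hXge n le_rfl, show n - n = 0 from by omega]
  rw [hXn1, hXn] at hfin
  have hune : ![x 1, x 0] ≠ 0 := by
    intro h'
    apply hc
    have h'' := congrFun h' 1
    rw [← hx0]
    simpa using h''
  have hab : a = b := by
    apply transfer n (by omega) a b hapos hbpos _ hune
    rw [hfin]
    funext r
    fin_cases r <;> simp
  -- conclude symmetry
  have hPsym : ∀ i : Fin n, P (i + 1) i = P i (i + 1) := by
    intro i
    have he := hedge i
    rw [haval i, hbval i, ← hab] at he
    have h2 : P i (i + 1) * P i (i + 1) = a * a := by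
      rw [← abs_mul_abs_self (P i (i + 1)), haval i]
    exact mul_left_cancel₀ (hAne i) (he.trans h2.symm)
  show (P * Matrix.diagonal lam)ᵀ = P * Matrix.diagonal lam
  ext i j
  rw [Matrix.transpose_apply, Matrix.mul_diagonal, Matrix.mul_diagonal,
    hlamconst i, hlamconst j]
  suffices h : P j i = P i j by rw [h]
  by_cases hij : j = i
  · rw [hij]
  by_cases hji : j = i + 1
  · rw [hji]; exact hPsym i
  by_cases hij2 : i = j + 1
  · rw [hij2]; exact (hPsym j).symm
  · rw [hsupport j i (fun h' => hij2 (by rw [h', hcancel1])) hij hji,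
      hsupport i j (fun h' => hji (by rw [h', hcancel1])) (fun h' => hij h'.symm) hij2]
end

section
/- Let U be a nonempty compact metric space with metric d, and let α : U × [0,∞) → ℝ be a continuous function such that: (i) there exists a unique u_0 ∈ U with α(u_0, 0) > α(u, 0) for all u ≠ u_0; and (ii) there exist constants A ≥ 0, B ≤ 0, and C ∈ ℝ with α(u, x) ≤ C + A·x·d(u, u_0) + B·x for all u ∈ U and x ≥ 0. Then: (1) if B < 0, there exist c > 0 and δ > 0 such that α(u, x) ≤ C − c·x for all u ∈ U and 0 < x < δ; (2) if B = 0, then for every c > 0 there exists δ > 0 such that α(u, x) ≤ C + c·x for all u ∈ U and 0 < x < δ. -/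
/-- Let `U` be a nonempty compact metric space and `α : U × [0,∞) → ℝ` continuous, with a
unique strict maximizer `u₀` of `α(·, 0)` and satisfying
`α(u, x) ≤ C + A·x·d(u, u₀) + B·x` with `A ≥ 0` and `B ≤ 0`. Then:
(1) if `B < 0`, `α(u, x) ≤ C − c·x` for some `c > 0` and all small `x > 0`;
(2) if `B = 0`, for every `c > 0`, `α(u, x) ≤ C + c·x` for all small `x > 0`. -/
theorem perturbed_max_bound {U : Type*} [MetricSpace U] [CompactSpace U] [Nonempty U]
    (α : U → ℝ → ℝ)
    (hcont : ContinuousOn (fun p : U × ℝ => α p.1 p.2) (Set.univ ×ˢ Set.Ici (0 : ℝ)))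
    (u₀ : U) (hu₀ : ∀ u : U, u ≠ u₀ → α u 0 < α u₀ 0)
    (A B C : ℝ) (hA : 0 ≤ A) (hB : B ≤ 0)
    (hbound : ∀ u : U, ∀ x : ℝ, 0 ≤ x → α u x ≤ C + A * x * dist u u₀ + B * x) :
    (B < 0 → ∃ c > (0 : ℝ), ∃ δ > (0 : ℝ), ∀ u : U, ∀ x : ℝ, 0 < x → x < δ →
        α u x ≤ C - c * x) ∧
    (B = 0 → ∀ c > (0 : ℝ), ∃ δ > (0 : ℝ), ∀ u : U, ∀ x : ℝ, 0 < x → x < δ →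
        α u x ≤ C + c * x) := by
  have hC0 : ∀ u : U, α u 0 ≤ C := by
    intro u
    have := hbound u 0 le_rfl
    simpa using this
  -- Key uniform estimate away from u₀
  have key : ∀ r : ℝ, 0 < r → ∃ ε > (0:ℝ), ∃ δ > (0:ℝ),
      ∀ u : U, ∀ x : ℝ, r ≤ dist u u₀ → 0 ≤ x → x < δ → α u x ≤ C - ε := by
    intro r hr
    set S : Set U := {u | r ≤ dist u u₀} with hS
    by_cases hne : S.Nonempty
    · have hSclosed : IsClosed S :=
        isClosed_le continuous_const (continuous_id.dist continuous_const)
      have hScomp : IsCompact S := hSclosed.isCompact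
      have hcont0 : ContinuousOn (fun u : U => α u 0) S := by
        have : ContinuousOn (fun u : U => α u 0) Set.univ := by
          apply hcont.comp (Continuous.continuousOn (continuous_id.prodMk continuous_const))
          intro u _
          simp
        exact this.mono (Set.subset_univ S)
      obtain ⟨u₁, hu₁S, hmax⟩ := hScomp.exists_isMaxOn hne hcont0
      have hu₁ne : u₁ ≠ u₀ := by
        intro h
        rw [h] at hu₁S
        simp [hS] at hu₁S
        linarith
      have hlt : α u₁ 0 < C := lt_of_lt_of_le (hu₀ u₁ hu₁ne) (hC0 u₀)
      set ε := (C - α u₁ 0) / 2 with hε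
      have hεpos : 0 < ε := by rw [hε]; linarith
      -- uniform continuity on compact slab
      have hKsub : (Set.univ ×ˢ Set.Icc (0:ℝ) 1 : Set (U × ℝ)) ⊆ (Set.univ ×ˢ Set.Ici (0:ℝ)) := by
        intro p hp
        exact ⟨trivial, hp.2.1⟩
      have hKcomp : IsCompact (Set.univ ×ˢ Set.Icc (0:ℝ) 1 : Set (U × ℝ)) :=
        isCompact_univ.prod isCompact_Icc
      have huc : UniformContinuousOn (fun p : U × ℝ => α p.1 p.2)
          (Set.univ ×ˢ Set.Icc (0:ℝ) 1 : Set (U × ℝ)) :=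
        hKcomp.uniformContinuousOn_of_continuous (hcont.mono hKsub)
      rw [Metric.uniformContinuousOn_iff] at huc
      obtain ⟨δ₀, hδ₀, hδ⟩ := huc ε hεpos
      refine ⟨ε, hεpos, min δ₀ 1, by positivity, ?_⟩
      intro u x hru hx0 hxδ
      have hx1 : x ≤ 1 := le_of_lt (lt_of_lt_of_le hxδ (min_le_right _ _))
      have hmem1 : ((u, x) : U × ℝ) ∈ Set.univ ×ˢ Set.Icc (0:ℝ) 1 := ⟨trivial, hx0, hx1⟩
      have hmem0 : ((u, (0:ℝ)) : U × ℝ) ∈ Set.univ ×ˢ Set.Icc (0:ℝ) 1 :=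
        ⟨trivial, le_rfl, zero_le_one⟩
      have hdist : dist ((u, x) : U × ℝ) ((u, (0:ℝ))) < δ₀ := by
        rw [Prod.dist_eq]
        simp only [dist_self]
        have : dist x (0:ℝ) = x := by
          rw [Real.dist_eq, sub_zero, abs_of_nonneg hx0]
        rw [this]
        have hx : x < δ₀ := lt_of_lt_of_le hxδ (min_le_left _ _)
        exact max_lt hδ₀ hx
      have hclose := hδ _ hmem1 _ hmem0 hdist
      have habs : |α u x - α u 0| < ε := by
        simpa [Real.dist_eq] using hclose
      have h1 : α u x < α u 0 + ε := by
        have := abs_lt.mp habs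
        linarith [this.2]
      have h2 : α u 0 ≤ α u₁ 0 := hmax hru
      have : α u₁ 0 = C - 2 * ε := by rw [hε]; ring
      linarith
    · refine ⟨1, one_pos, 1, one_pos, ?_⟩
      intro u x hru _ _
      exact absurd ⟨u, hru⟩ hne
  constructor
  · -- B < 0
    intro hBneg
    set c := -B / 2 with hc
    have hcpos : 0 < c := by rw [hc]; linarith
    by_cases hA0 : A = 0
    · refine ⟨c, hcpos, 1, one_pos, ?_⟩
      intro u x hx0 _
      have := hbound u x hx0.le
      rw [hA0] at this
      have : α u x ≤ C + B * x := by linarith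
      nlinarith
    · have hApos : 0 < A := lt_of_le_of_ne hA (Ne.symm hA0)
      set r := -B / (2 * A) with hr
      have hrpos : 0 < r := by rw [hr]; apply div_pos (by linarith) (by linarith)
      obtain ⟨ε, hεpos, δ₁, hδ₁pos, hfar⟩ := key r hrpos
      refine ⟨c, hcpos, min δ₁ (ε / c), lt_min hδ₁pos (div_pos hεpos hcpos), ?_⟩
      intro u x hx0 hxδ
      by_cases hd : dist u u₀ < r
      · have := hbound u x hx0.le
        have hAx : A * x * dist u u₀ ≤ A * x * r := by
          apply mul_le_mul_of_nonneg_left hd.le (by positivity)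
        have hArB : A * r = -B / 2 := by
          rw [hr]; field_simp
        nlinarith
      · push_neg at hd
        have h1 := hfar u x hd hx0.le (lt_of_lt_of_le hxδ (min_le_left _ _))
        have h2 : x < ε / c := lt_of_lt_of_le hxδ (min_le_right _ _)
        have : c * x < ε := by
          rw [lt_div_iff₀ hcpos] at h2; linarith [h2]
        linarith
  · -- B = 0
    intro hB0 c hcpos
    by_cases hA0 : A = 0
    · refine ⟨1, one_pos, ?_⟩
      intro u x hx0 _
      have := hbound u x hx0.le
      rw [hA0, hB0] at this
      nlinarith
    · have hApos : 0 < A := lt_of_le_of_ne hA (Ne.symm hA0)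
      set r := c / A with hr
      have hrpos : 0 < r := by rw [hr]; positivity
      obtain ⟨ε, hεpos, δ₁, hδ₁pos, hfar⟩ := key r hrpos
      refine ⟨δ₁, hδ₁pos, ?_⟩
      intro u x hx0 hxδ
      by_cases hd : dist u u₀ < r
      · have := hbound u x hx0.le
        have hAx : A * x * dist u u₀ ≤ A * x * r := by
          apply mul_le_mul_of_nonneg_left hd.le (by positivity)
        have hArc : A * r = c := by rw [hr]; field_simp
        rw [hB0] at this
        nlinarith
      · push_neg at hd
        have h1 := hfar u x hd hx0.le hxδ
        nlinarith
end

section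
/- Let a_1, a_2, …, a_n ∈ ℝ^k be vectors such that for every i ∈ {1,…,n} there does not exist v ∈ ℝ^k with ⟨v, a_i⟩ < 0 and ⟨v, a_j⟩ ≤ 0 for all j ≠ i. Then there exist strictly positive reals λ_1, λ_2, …, λ_n such that Σ_{i=1}^n λ_i a_i = 0. -/
open Matrix

/-- Farkas' lemma, proved by induction on the generating set (Fourier–Motzkin style). -/
lemma farkas_cone {k : ℕ} {ι : Type*} [DecidableEq ι] (s : Finset ι) :
    ∀ (a : ι → Fin k → ℝ) (b : Fin k → ℝ),
    (∀ v : Fin k → ℝ, (∀ j ∈ s, v ⬝ᵥ a j ≤ 0) → v ⬝ᵥ b ≤ 0) →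
    ∃ μ : ι → ℝ, (∀ j, 0 ≤ μ j) ∧ (∀ j, j ∉ s → μ j = 0) ∧ ∑ j ∈ s, μ j • a j = b := by
  induction s using Finset.induction_on with
  | empty =>
    intro a b h
    have hb : b = 0 := by
      have := h b (by simp)
      have h2 : (0:ℝ) ≤ b ⬝ᵥ b := by
        rw [dotProduct]
        exact Finset.sum_nonneg fun i _ => mul_self_nonneg _
      have : b ⬝ᵥ b = 0 := le_antisymm this h2
      exact (dotProduct_self_eq_zero).1 this
    exact ⟨0, fun j => le_refl 0, fun j _ => rfl, by simp [hb]⟩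
  | @insert i t hi ih =>
    intro a b h
    by_cases H : ∀ v : Fin k → ℝ, (∀ j ∈ t, v ⬝ᵥ a j ≤ 0) → v ⬝ᵥ b ≤ 0
    · obtain ⟨μ, hμ0, hμs, hμsum⟩ := ih a b H
      refine ⟨μ, hμ0, fun j hj => hμs j (fun hjt => hj (Finset.mem_insert_of_mem hjt)), ?_⟩
      rw [Finset.sum_insert hi, hμs i hi, hμsum]
      simp
    · push_neg at H
      obtain ⟨y, hy, hyb⟩ := H
      have hyi : 0 < y ⬝ᵥ a i := by
        by_contra hle
        push_neg at hle
        exact absurd (h y (by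
          intro j hj
          rcases Finset.mem_insert.1 hj with rfl | hjt
          · exact hle
          · exact hy j hjt)) (not_le.2 hyb)
      set α := y ⬝ᵥ a i with hα
      set a' : ι → Fin k → ℝ := fun j => a j - ((y ⬝ᵥ a j) / α) • a i with ha'
      set b' : Fin k → ℝ := b - ((y ⬝ᵥ b) / α) • a i with hb'
      have key : ∀ z : Fin k → ℝ, (∀ j ∈ t, z ⬝ᵥ a' j ≤ 0) → z ⬝ᵥ b' ≤ 0 := by
        intro z hz
        set w : Fin k → ℝ := z - ((z ⬝ᵥ a i) / α) • y with hw
        have hwa : ∀ j, w ⬝ᵥ a j = z ⬝ᵥ a' j := by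
          intro j
          simp [hw, ha', sub_dotProduct, dotProduct_sub,
            smul_dotProduct, dotProduct_smul, smul_eq_mul]
          ring
        have hwb : w ⬝ᵥ b = z ⬝ᵥ b' := by
          simp [hw, hb', sub_dotProduct, dotProduct_sub,
            smul_dotProduct, dotProduct_smul, smul_eq_mul]
          ring
        have hw0 : ∀ j ∈ insert i t, w ⬝ᵥ a j ≤ 0 := by
          intro j hj
          rcases Finset.mem_insert.1 hj with rfl | hjt
          · rw [hwa]
            have : z ⬝ᵥ a' j = 0 := by
              simp [ha', dotProduct_sub, dotProduct_smul, smul_eq_mul, ← hα,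
                div_self (ne_of_gt hyi)]
            rw [this]
          · rw [hwa]; exact hz j hjt
        rw [← hwb]
        exact h w hw0
      obtain ⟨μ, hμ0, hμs, hμsum⟩ := ih a' b' key
      set c : ℝ := (y ⬝ᵥ b - ∑ j ∈ t, μ j * (y ⬝ᵥ a j)) / α with hc
      have hc0 : 0 ≤ c := by
        apply div_nonneg _ (le_of_lt hyi)
        have : ∑ j ∈ t, μ j * (y ⬝ᵥ a j) ≤ 0 := by
          apply Finset.sum_nonpos
          intro j hj
          exact mul_nonpos_of_nonneg_of_nonpos (hμ0 j) (hy j hj)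
        linarith
      refine ⟨Function.update μ i c, ?_, ?_, ?_⟩
      · intro j
        rcases eq_or_ne j i with rfl | hji
        · simp [hc0]
        · simp [Function.update_of_ne hji, hμ0 j]
      · intro j hj
        have hji : j ≠ i := by rintro rfl; exact hj (Finset.mem_insert_self j t)
        rw [Function.update_of_ne hji]
        exact hμs j (fun hjt => hj (Finset.mem_insert_of_mem hjt))
      · rw [Finset.sum_insert hi]
        have hupd : ∀ j ∈ t, Function.update μ i c j • a j = μ j • a j := by
          intro j hj
          have hji : j ≠ i := by rintro rfl; exact hi hj
          rw [Function.update_of_ne hji]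
        rw [Finset.sum_congr rfl hupd, Function.update_self]
        -- from hμsum : ∑ j ∈ t, μ j • a' j = b'
        have expand : ∑ j ∈ t, μ j • a' j
            = ∑ j ∈ t, μ j • a j - (∑ j ∈ t, μ j * ((y ⬝ᵥ a j) / α)) • a i := by
          rw [Finset.sum_smul]
          rw [← Finset.sum_sub_distrib]
          apply Finset.sum_congr rfl
          intro j hj
          rw [ha']
          rw [smul_sub, smul_smul]
        rw [expand, hb'] at hμsum
        have : ∑ j ∈ t, μ j • a j = b - ((y ⬝ᵥ b) / α) • a i
            + (∑ j ∈ t, μ j * ((y ⬝ᵥ a j) / α)) • a i := by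
          rw [← hμsum]; abel
        rw [this, hc]
        have hsum : ∑ j ∈ t, μ j * ((y ⬝ᵥ a j) / α) = (∑ j ∈ t, μ j * (y ⬝ᵥ a j)) / α := by
          rw [Finset.sum_div]
          apply Finset.sum_congr rfl
          intro j _
          ring
        rw [hsum, sub_div, sub_smul]
        abel

/-- A variant of Farkas' lemma: if for every `i` there is no `v ∈ ℝ^k` with `⟨v, a i⟩ < 0`
and `⟨v, a j⟩ ≤ 0` for all `j ≠ i`, then some strictly positive combination of the `a i`
vanishes. -/
theorem farkas_variant (n k : ℕ) (a : Fin n → (Fin k → ℝ))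
    (h : ∀ i : Fin n, ¬ ∃ v : Fin k → ℝ, v ⬝ᵥ a i < 0 ∧ ∀ j : Fin n, j ≠ i → v ⬝ᵥ a j ≤ 0) :
    ∃ lam : Fin n → ℝ, (∀ i, 0 < lam i) ∧ ∑ i, lam i • a i = 0 := by
  -- for each i, find nonneg coefficients c with c i = 1 and ∑ c j • a j = 0
  have key : ∀ i : Fin n, ∃ c : Fin n → ℝ, (∀ j, 0 ≤ c j) ∧ c i = 1 ∧ ∑ j, c j • a j = 0 := by
    intro i
    have hfark := farkas_cone (Finset.univ.erase i) a (-a i) ?_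
    · obtain ⟨μ, hμ0, hμs, hμsum⟩ := hfark
      have hμi : μ i = 0 := hμs i (by simp)
      refine ⟨Function.update μ i 1, ?_, by simp, ?_⟩
      · intro j
        rcases eq_or_ne j i with rfl | hji
        · simp
        · simp [Function.update_of_ne hji, hμ0 j]
      · rw [← Finset.sum_erase_add _ _ (Finset.mem_univ i), Function.update_self]
        have : ∑ j ∈ Finset.univ.erase i, Function.update μ i 1 j • a j
            = ∑ j ∈ Finset.univ.erase i, μ j • a j := by
          apply Finset.sum_congr rfl
          intro j hj
          rw [Function.update_of_ne (Finset.ne_of_mem_erase hj)]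
        rw [this, hμsum]
        simp
    · intro v hv
      by_contra hlt
      push_neg at hlt
      rw [dotProduct_neg] at hlt
      exact h i ⟨v, by linarith, fun j hj => hv j (Finset.mem_erase.2 ⟨hj, Finset.mem_univ j⟩)⟩
  choose c hc0 hc1 hcsum using key
  refine ⟨fun j => ∑ i, c i j, ?_, ?_⟩
  · intro j
    have : (0:ℝ) < c j j := by rw [hc1 j]; norm_num
    calc (0:ℝ) < c j j := this
      _ ≤ ∑ i, c i j := Finset.single_le_sum (fun i _ => hc0 i j) (Finset.mem_univ j)
  · have : ∑ j, (∑ i, c i j) • a j = ∑ i, ∑ j, c i j • a j := by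
      rw [Finset.sum_comm]
      apply Finset.sum_congr rfl
      intro j _
      rw [Finset.sum_smul]
    rw [this]
    simp [hcsum]
end

section
/- Let Q' be a real symmetric n×n matrix of rank at most 2 with Q'_ii = 1 for all i and |Q'_ij| ≤ 1 for all i, j. Then Q' is positive semidefinite. -/
open Matrix

/-- A real symmetric `n × n` matrix of rank at most `2` with unit diagonal and all entries
of absolute value at most `1` is positive semidefinite. -/
theorem posSemidef_of_rank_le_two (n : ℕ) (Q : Matrix (Fin n) (Fin n) ℝ)
    (hsymm : Q.IsSymm) (hrank : Q.rank ≤ 2) (hdiag : ∀ i, Q i i = 1)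
    (hbound : ∀ i j, |Q i j| ≤ 1) :
    Q.PosSemidef := by
  have hQ : Q.IsHermitian := by
    rwa [Matrix.IsHermitian, conjTranspose_eq_transpose_of_trivial]
  -- each eigenvalue is at most n
  have hle : ∀ i, hQ.eigenvalues i ≤ (n : ℝ) := by
    intro i
    have hnorm : ∑ a, hQ.eigenvectorBasis i a * hQ.eigenvectorBasis i a = 1 := by
      have h : (inner ℝ (hQ.eigenvectorBasis i) (hQ.eigenvectorBasis i) : ℝ) = 1 := by
        rw [real_inner_self_eq_norm_sq, hQ.eigenvectorBasis.orthonormal.1 i, one_pow]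
      simpa only [PiLp.inner_apply, RCLike.inner_apply, conj_trivial, mul_comm] using h
    have heig : hQ.eigenvalues i =
        ∑ a, ∑ b, hQ.eigenvectorBasis i a * (Q a b * hQ.eigenvectorBasis i b) := by
      rw [hQ.eigenvalues_eq i]
      simp [dotProduct, Matrix.mulVec, Finset.mul_sum]
    rw [heig]
    calc ∑ a, ∑ b, hQ.eigenvectorBasis i a * (Q a b * hQ.eigenvectorBasis i b)
        ≤ ∑ a, ∑ b, |hQ.eigenvectorBasis i a| * |hQ.eigenvectorBasis i b| := by
          apply Finset.sum_le_sum; intro a _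
          apply Finset.sum_le_sum; intro b _
          calc hQ.eigenvectorBasis i a * (Q a b * hQ.eigenvectorBasis i b)
              ≤ |hQ.eigenvectorBasis i a * (Q a b * hQ.eigenvectorBasis i b)| := le_abs_self _
            _ = |hQ.eigenvectorBasis i a| * (|Q a b| * |hQ.eigenvectorBasis i b|) := by
                rw [abs_mul, abs_mul]
            _ ≤ |hQ.eigenvectorBasis i a| * (1 * |hQ.eigenvectorBasis i b|) := by
                apply mul_le_mul_of_nonneg_left _ (abs_nonneg _)
                exact mul_le_mul_of_nonneg_right (hbound a b) (abs_nonneg _)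
            _ = |hQ.eigenvectorBasis i a| * |hQ.eigenvectorBasis i b| := by ring
      _ = (∑ a, |hQ.eigenvectorBasis i a|) ^ 2 := by rw [sq, Finset.sum_mul_sum]
      _ ≤ (Finset.univ.card : ℝ) * ∑ a, |hQ.eigenvectorBasis i a| ^ 2 :=
          sq_sum_le_card_mul_sum_sq
      _ = (n : ℝ) := by
          simp only [Finset.card_univ, Fintype.card_fin]
          rw [show (∑ a, |hQ.eigenvectorBasis i a| ^ 2)
              = ∑ a, hQ.eigenvectorBasis i a * hQ.eigenvectorBasis i a from
            Finset.sum_congr rfl fun a _ => by rw [sq_abs, sq]]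
          rw [hnorm, mul_one]
  -- trace equals sum of eigenvalues
  have htr : (∑ i, hQ.eigenvalues i) = (n : ℝ) := by
    have h1 : Q.trace = ∑ i, hQ.eigenvalues i := by
      nth_rewrite 1 [hQ.spectral_theorem]
      rw [Unitary.conjStarAlgAut_apply, trace_mul_cycle]
      have : (star (hQ.eigenvectorUnitary : Matrix (Fin n) (Fin n) ℝ)) *
          (hQ.eigenvectorUnitary : Matrix (Fin n) (Fin n) ℝ) = 1 :=
        Unitary.coe_star_mul_self _
      rw [this, one_mul, trace_diagonal]
      simp
    have h2 : Q.trace = (n : ℝ) := by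
      simp [Matrix.trace, Matrix.diag, hdiag]
    rw [← h1, h2]
  -- rank condition
  have hcard : (Finset.univ.filter fun i => hQ.eigenvalues i ≠ 0).card ≤ 2 := by
    have := hQ.rank_eq_card_non_zero_eigs
    rw [this] at hrank
    simpa [Fintype.card_subtype] using hrank
  -- eigenvalues nonneg
  have hnonneg : ∀ i, 0 ≤ hQ.eigenvalues i := by
    by_contra h
    push_neg at h
    obtain ⟨j, hj⟩ := h
    set S := (Finset.univ.filter fun i => hQ.eigenvalues i ≠ 0) with hS
    have hjS : j ∈ S := by simp [hS]; exact ne_of_lt hj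
    have hsum : ∑ i ∈ S, hQ.eigenvalues i = (n : ℝ) := by
      rw [← htr]
      exact Finset.sum_filter_ne_zero _
    have hrest : ∑ i ∈ S.erase j, hQ.eigenvalues i ≤ (n : ℝ) := by
      calc ∑ i ∈ S.erase j, hQ.eigenvalues i ≤ (S.erase j).card • (n : ℝ) :=
            Finset.sum_le_card_nsmul _ _ _ (fun i _ => hle i)
        _ ≤ 1 • (n : ℝ) := by
            apply nsmul_le_nsmul_left (by positivity)
            have := Finset.card_erase_of_mem hjS
            omega
        _ = (n : ℝ) := one_smul _ _
    have : (n : ℝ) < (n : ℝ) := by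
      calc (n : ℝ) = hQ.eigenvalues j + ∑ i ∈ S.erase j, hQ.eigenvalues i := by
            rw [← Finset.add_sum_erase _ _ hjS] at hsum; linarith [hsum]
        _ < 0 + (n : ℝ) := by
            apply add_lt_add_of_lt_of_le hj hrest
        _ = (n : ℝ) := zero_add _
    exact lt_irrefl _ this
  exact hQ.posSemidef_iff_eigenvalues_nonneg.mpr hnonneg
end
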